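/- arXiv:1805.02979 — 9 statements merged into one kernel-verified Lean document; each statement's English description precedes it below -/
import Mathlib

section
/- If h : 𝔻 → (-1,1) is a real-valued harmonic function on the unit disk with h(0) = a, then for all z ∈ 𝔻, h(z) ≤ (4/π)·arctan(s(a)·(1+|z|)/(1-|z|)) − 1, where s(a) = tan(π(a+1)/4). -/
open Real Set Metric

/-
Subtracting `i · Im F(0)` and rescaling, `ζ = π(F + 1)/4` maps the disk holomorphically into the
strip `0 < Re ζ < π/2` with `ζ(0) = π(a+1)/4`, and `tan` maps this strip into the right half-plane,
so `P = tan ∘ ζ` has positive real part and `P(0) = s(a)`. The Schwarz lemma for `(P - s)/(P + s)`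
confines `P(z)` to the disk `|P - s| ≤ |z| |P + s|`. Since `tan` sends the line `Re ζ = x` to the
circle through `±i` and `tan x`, and that circle meets the disk only when
`tan x ≤ s (1 + |z|)/(1 - |z|)`, the bound follows by taking `arctan`.
-/

namespace Complex

theorem cos_re (ζ : ℂ) : (cos ζ).re = Real.cos ζ.re * Real.cosh ζ.im := by
  rw [cos_eq]; simp [← ofReal_cos, ← ofReal_sin, ← ofReal_sinh, ← ofReal_cosh]

theorem cos_im (ζ : ℂ) : (cos ζ).im = -(Real.sin ζ.re * Real.sinh ζ.im) := by
  rw [cos_eq]; simp [← ofReal_cos, ← ofReal_sin, ← ofReal_sinh, ← ofReal_cosh]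

theorem sin_re (ζ : ℂ) : (sin ζ).re = Real.sin ζ.re * Real.cosh ζ.im := by
  rw [sin_eq]; simp [← ofReal_cos, ← ofReal_sin, ← ofReal_sinh, ← ofReal_cosh]

theorem sin_im (ζ : ℂ) : (sin ζ).im = Real.cos ζ.re * Real.sinh ζ.im := by
  rw [sin_eq]; simp [← ofReal_cos, ← ofReal_sin, ← ofReal_sinh, ← ofReal_cosh]

theorem normSq_cos (ζ : ℂ) : normSq (cos ζ) = Real.cos ζ.re ^ 2 + Real.sinh ζ.im ^ 2 := by
  rw [normSq_apply, cos_re, cos_im]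
  linear_combination Real.cos ζ.re ^ 2 * Real.cosh_sq ζ.im
    + Real.sinh ζ.im ^ 2 * Real.sin_sq_add_cos_sq ζ.re

theorem normSq_sin (ζ : ℂ) : normSq (sin ζ) = Real.sin ζ.re ^ 2 + Real.sinh ζ.im ^ 2 := by
  rw [normSq_apply, sin_re, sin_im]
  linear_combination Real.sin ζ.re ^ 2 * Real.cosh_sq ζ.im
    + Real.sinh ζ.im ^ 2 * Real.sin_sq_add_cos_sq ζ.re

theorem cos_ne_zero_of_cos_re_ne_zero {ζ : ℂ} (h : Real.cos ζ.re ≠ 0) : cos ζ ≠ 0 := by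
  rw [← normSq_pos, normSq_cos]; positivity

theorem tan_re (ζ : ℂ) :
    (tan ζ).re = Real.sin ζ.re * Real.cos ζ.re / normSq (cos ζ) := by
  rw [tan_eq_sin_div_cos, div_re, sin_re, sin_im, cos_re, cos_im, ← add_div]
  congr 1
  linear_combination Real.sin ζ.re * Real.cos ζ.re * Real.cosh_sq ζ.im

theorem tan_re_pos {ζ : ℂ} (h₀ : 0 < ζ.re) (h₁ : ζ.re < π / 2) : 0 < (tan ζ).re := by
  have hcos : 0 < Real.cos ζ.re := Real.cos_pos_of_mem_Ioo ⟨by linarith [pi_pos], h₁⟩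
  have hsin : 0 < Real.sin ζ.re := Real.sin_pos_of_pos_of_lt_pi h₀ (by linarith)
  rw [tan_re]
  exact div_pos (mul_pos hsin hcos) (normSq_pos.2 (cos_ne_zero_of_cos_re_ne_zero hcos.ne'))

/-- `tan` maps the vertical line `re ζ = x` onto the circle through `±i` and `tan x`. -/
theorem tan_re_mul_normSq_tan_sub_one {ζ : ℂ} (h : Real.cos ζ.re ≠ 0) :
    Real.tan ζ.re * (normSq (tan ζ) - 1) = (Real.tan ζ.re ^ 2 - 1) * (tan ζ).re := by
  have hD : normSq (cos ζ) ≠ 0 := (normSq_pos.2 (cos_ne_zero_of_cos_re_ne_zero h)).ne'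
  rw [tan_re, tan_eq_sin_div_cos, normSq_div, normSq_sin, Real.tan_eq_sin_div_cos]
  rw [normSq_cos] at hD ⊢
  field_simp
  ring

/-- A point `p` of the right half-plane with `|p - s| ≤ r |p + s|` lies in the disk with diameter
`[s(1-r)/(1+r), s(1+r)/(1-r)]`; the circle through `±i` and `t` meets that disk only if
`t ≤ s(1+r)/(1-r)`. -/
theorem le_of_norm_sub_le_of_circle {p : ℂ} {t s r : ℝ} (hp : 0 < p.re) (hs : 0 < s)
    (hr₀ : 0 ≤ r) (hr₁ : r < 1) (hcirc : t * (normSq p - 1) = (t ^ 2 - 1) * p.re)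
    (hdisk : ‖p - s‖ ≤ r * ‖p + s‖) : t * (1 - r) ≤ s * (1 + r) := by
  obtain ⟨U, V⟩ := p
  simp only [normSq_apply] at hcirc hp
  have hsq : (U * (1 - r) - s * (1 + r)) * (U * (1 + r) - s * (1 - r))
      + (1 - r ^ 2) * V ^ 2 ≤ 0 := by
    have := pow_le_pow_left₀ (norm_nonneg _) hdisk 2
    rw [mul_pow, ← normSq_eq_norm_sq, ← normSq_eq_norm_sq] at this
    simp only [normSq_apply] at this
    simp only [sub_re, ofReal_re, sub_im, ofReal_im, sub_zero, add_re, add_im, add_zero] at this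
    linarith
  have hr2 : 0 < 1 - r ^ 2 := by nlinarith
  have hUM : U * (1 - r) ≤ s * (1 + r) := by
    by_contra! hlt
    have : 0 < U * (1 + r) - s * (1 - r) := by nlinarith
    nlinarith [mul_pos (sub_pos.2 hlt) this, mul_nonneg hr2.le (sq_nonneg V)]
  by_contra! hlt
  have htU : 0 < t - U := by nlinarith
  have htm : 0 < t * (1 + r) - s * (1 - r) := by nlinarith
  have key : t * ((U * (1 - r) - s * (1 + r)) * (U * (1 + r) - s * (1 - r)) + (1 - r ^ 2) * V ^ 2)
      = (1 - r ^ 2) * (1 + s ^ 2) * (t - U)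
        + U * ((t * (1 - r) - s * (1 + r)) * (t * (1 + r) - s * (1 - r))) := by
    linear_combination (1 - r ^ 2) * hcirc
  nlinarith [mul_nonpos_of_nonneg_of_nonpos (by linarith : 0 ≤ t) hsq,
    mul_pos (mul_pos hr2 (by positivity : (0:ℝ) < 1 + s ^ 2)) htU,
    mul_pos hp (mul_pos (sub_pos.2 hlt) htm)]

theorem tan_re_mul_one_sub_le {ζ : ℂ} {s r : ℝ} (h₀ : 0 < ζ.re) (h₁ : ζ.re < π / 2) (hs : 0 < s)
    (hr₀ : 0 ≤ r) (hr₁ : r < 1) (h : ‖tan ζ - s‖ ≤ r * ‖tan ζ + s‖) :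
    Real.tan ζ.re * (1 - r) ≤ s * (1 + r) :=
  le_of_norm_sub_le_of_circle (tan_re_pos h₀ h₁) hs hr₀ hr₁
    (tan_re_mul_normSq_tan_sub_one (Real.cos_pos_of_mem_Ioo ⟨by linarith [pi_pos], h₁⟩).ne') h

theorem norm_sub_lt_norm_add_of_re_pos {p : ℂ} {s : ℝ} (hp : 0 < p.re) (hs : 0 < s) :
    ‖p - s‖ < ‖p + s‖ := by
  rw [← sq_lt_sq₀ (norm_nonneg _) (norm_nonneg _), ← normSq_eq_norm_sq, ← normSq_eq_norm_sq,
    normSq_apply, normSq_apply]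
  simp only [sub_re, add_re, sub_im, add_im, ofReal_re, ofReal_im]
  nlinarith [mul_pos hp hs]

theorem norm_sub_le_mul_norm_add_of_re_pos {P : ℂ → ℂ} {s : ℝ}
    (hP : DifferentiableOn ℂ P (ball 0 1)) (hre : ∀ z ∈ ball (0 : ℂ) 1, 0 < (P z).re)
    (hP₀ : P 0 = s) {z : ℂ} (hz : z ∈ ball (0 : ℂ) 1) : ‖P z - s‖ ≤ ‖z‖ * ‖P z + s‖ := by
  have hs : 0 < s := by simpa [hP₀] using hre 0 (mem_ball_self one_pos)
  have hden : ∀ w ∈ ball (0 : ℂ) 1, P w + s ≠ 0 := fun w hw h ↦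
    (norm_nonneg _).not_gt (by simpa [h] using norm_sub_lt_norm_add_of_re_pos (hre w hw) hs)
  set G : ℂ → ℂ := fun w ↦ (P w - s) / (P w + s)
  have hG : MapsTo G (ball 0 1) (closedBall 0 1) := fun w hw ↦ by
    rw [mem_closedBall_zero_iff, norm_div, div_le_one (norm_pos_iff.2 (hden w hw))]
    exact (norm_sub_lt_norm_add_of_re_pos (hre w hw) hs).le
  have hschwarz := norm_le_norm_of_mapsTo_ball (f := G)
    ((hP.sub_const _).div (hP.add_const _) hden) hG (by simp [G, hP₀]) (mem_ball_zero_iff.1 hz)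
  rwa [norm_div, div_le_iff₀ (norm_pos_iff.2 (hden z hz))] at hschwarz

theorem tan_re_mul_one_sub_norm_le_of_mapsTo_strip {f : ℂ → ℂ} {x₀ : ℝ}
    (hf : DifferentiableOn ℂ f (ball 0 1)) (hmaps : MapsTo f (ball 0 1) (re ⁻¹' Ioo 0 (π / 2)))
    (hf₀ : f 0 = x₀) {z : ℂ} (hz : z ∈ ball (0 : ℂ) 1) :
    Real.tan (f z).re * (1 - ‖z‖) ≤ Real.tan x₀ * (1 + ‖z‖) := by
  have hcos : ∀ w ∈ ball (0 : ℂ) 1, Real.cos (f w).re ≠ 0 := fun w hw ↦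
    (Real.cos_pos_of_mem_Ioo ⟨by linarith [pi_pos, (hmaps hw).1], (hmaps hw).2⟩).ne'
  have htan : DifferentiableOn ℂ (fun w ↦ tan (f w)) (ball 0 1) := fun w hw ↦
    (differentiableAt_tan.2 (cos_ne_zero_of_cos_re_ne_zero (hcos w hw))
      ).comp_differentiableWithinAt w (hf w hw)
  have hx₀ : x₀ ∈ Ioo 0 (π / 2) := by simpa [hf₀] using hmaps (mem_ball_self one_pos)
  exact tan_re_mul_one_sub_le (hmaps hz).1 (hmaps hz).2
    (Real.tan_pos_of_pos_of_lt_pi_div_two hx₀.1 hx₀.2) (norm_nonneg z) (mem_ball_zero_iff.1 hz)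
    (norm_sub_le_mul_norm_add_of_re_pos htan (fun w hw ↦ tan_re_pos (hmaps hw).1 (hmaps hw).2)
      (by rw [hf₀, ofReal_tan]) hz)

end Complex

theorem Real.le_arctan_of_tan_le {x y : ℝ} (h₀ : -(π / 2) < x) (h₁ : x < π / 2)
    (h : Real.tan x ≤ y) : x ≤ Real.arctan y :=
  Real.arctan_tan h₀ h₁ ▸ Real.arctan_mono h

open Complex in
/-- Schwarz lemma (upper bound): if `h` is a real-valued harmonic function on the unit
disk with values in `(-1,1)` and `h 0 = a`, then
`h z ≤ (4/π)·arctan (s(a)·(1+|z|)/(1-|z|)) - 1` with `s(a) = tan (π(a+1)/4)`.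
Harmonicity is encoded by `h` being the real part of a holomorphic function `F`. -/
theorem harmonic_schwarz_upper (a : ℝ) (h : ℂ → ℝ) (F : ℂ → ℂ)
    (hF : DifferentiableOn ℂ F (Metric.ball 0 1))
    (hre : ∀ z ∈ Metric.ball (0 : ℂ) 1, h z = (F z).re)
    (hmaps : Set.MapsTo h (Metric.ball 0 1) (Set.Ioo (-1 : ℝ) 1))
    (h0 : h 0 = a) :
    ∀ z ∈ Metric.ball (0 : ℂ) 1,
      h z ≤ (4 / Real.pi) *
          Real.arctan (Real.tan (Real.pi * (a + 1) / 4) * (1 + ‖z‖) / (1 - ‖z‖)) - 1 := by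
  intro z hz
  set ζ : ℂ → ℂ := fun w ↦ π / 4 * (F w + 1 - (F 0).im * I)
  have hζ_re : ∀ w ∈ ball (0 : ℂ) 1, (ζ w).re = π * (h w + 1) / 4 := fun w hw ↦ by
    simp [ζ, hre w hw]; ring
  have hζ_maps : MapsTo ζ (ball 0 1) (re ⁻¹' Ioo 0 (π / 2)) := fun w hw ↦ by
    obtain ⟨h₁, h₂⟩ := hmaps hw
    simp only [mem_preimage, hζ_re w hw, mem_Ioo]
    constructor <;> nlinarith [pi_pos]
  have hζ₀ : ζ 0 = ((π * (a + 1) / 4 : ℝ) : ℂ) := by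
    have := hζ_re 0 (mem_ball_self one_pos)
    apply Complex.ext <;> simp_all [ζ]
  have htan := tan_re_mul_one_sub_norm_le_of_mapsTo_strip
    (((hF.add_const 1).sub_const _).const_mul _) hζ_maps hζ₀ hz
  have hx := hζ_maps hz
  rw [mem_preimage, hζ_re z hz] at hx
  rw [hζ_re z hz] at htan
  have harctan := Real.le_arctan_of_tan_le (by linarith [pi_pos, hx.1]) hx.2
    ((le_div_iff₀ (by linarith [mem_ball_zero_iff.1 hz])).2 htan)
  have := pi_pos
  field_simp
  linarith
end

section
/- If h : 𝔻 → (-1,1) is a real-valued harmonic function with h(0) = a, then the norm of the gradient of h at 0 satisfies |∇h(0)| ≤ (4/π)·sin(π(a+1)/2). -/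
/-! The map `w ↦ tan (π w / 4)` sends the strip `|Re w| < 1` into the unit disk, so composing it
with the holomorphic `F` (with `h = Re F`) gives a self-map `g` of the disk. The Schwarz–Pick
lemma bounds `|g'(0)|` by `1 - |g(0)|²`, and since `1 - |tan ζ|² = cos (2 Re ζ) / |cos ζ|²` and
`g'(0) = (π/4) F'(0) / cos² ζ` with `ζ = π F(0) / 4`, the factors `|cos ζ|²` cancel, leaving
`|F'(0)| ≤ (4/π) cos (π a / 2)`. Finally `|∇h(0)| = |F'(0)|`. -/

open Real Set Metric Topology ComplexConjugate

namespace Complex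

theorem normSq_cos_sub_normSq_sin (ζ : ℂ) :
    normSq (cos ζ) - normSq (sin ζ) = Real.cos (2 * ζ.re) := by
  have key : (normSq (cos ζ) : ℂ) - normSq (sin ζ) = Real.cos (2 * ζ.re) := by
    rw [← mul_conj, ← mul_conj, ← cos_conj, ← sin_conj, ← cos_add, add_conj, ← ofReal_cos]
  exact_mod_cast key

theorem cos_ne_zero_of_cos_two_re_pos {ζ : ℂ} (h : 0 < Real.cos (2 * ζ.re)) : cos ζ ≠ 0 := by
  intro hcos
  have := normSq_cos_sub_normSq_sin ζ
  rw [hcos, map_zero] at this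
  linarith [normSq_nonneg (sin ζ)]

theorem one_sub_sq_norm_tan {ζ : ℂ} (h : cos ζ ≠ 0) :
    1 - ‖tan ζ‖ ^ 2 = Real.cos (2 * ζ.re) / ‖cos ζ‖ ^ 2 := by
  have hpos : 0 < normSq (cos ζ) := normSq_pos.2 h
  rw [tan_eq_sin_div_cos, norm_div, div_pow, Complex.sq_norm, Complex.sq_norm,
    ← normSq_cos_sub_normSq_sin]
  field_simp

theorem norm_tan_lt_one {ζ : ℂ} (h : 0 < Real.cos (2 * ζ.re)) : ‖tan ζ‖ < 1 := by
  have hcos := cos_ne_zero_of_cos_two_re_pos h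
  have : 0 < 1 - ‖tan ζ‖ ^ 2 := by
    rw [one_sub_sq_norm_tan hcos]
    exact div_pos h (by positivity)
  nlinarith [norm_nonneg (tan ζ)]

end Complex

noncomputable def diskMobius (c z : ℂ) : ℂ := (z - c) / (1 - conj c * z)

theorem sq_norm_one_sub_conj_mul_sub_sq_norm_sub (c z : ℂ) :
    ‖1 - conj c * z‖ ^ 2 - ‖z - c‖ ^ 2 = (1 - ‖z‖ ^ 2) * (1 - ‖c‖ ^ 2) := by
  simp only [Complex.sq_norm, Complex.normSq_apply, Complex.sub_re, Complex.sub_im,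
    Complex.mul_re, Complex.mul_im, Complex.conj_re, Complex.conj_im, Complex.one_re,
    Complex.one_im]
  ring

theorem norm_sub_lt_norm_one_sub_conj_mul {c z : ℂ} (hc : ‖c‖ < 1) (hz : ‖z‖ < 1) :
    ‖z - c‖ < ‖1 - conj c * z‖ := by
  have key := sq_norm_one_sub_conj_mul_sub_sq_norm_sub c z
  have : 0 < (1 - ‖z‖ ^ 2) * (1 - ‖c‖ ^ 2) := by
    apply mul_pos <;> nlinarith [norm_nonneg c, norm_nonneg z]
  exact lt_of_pow_lt_pow_left₀ 2 (norm_nonneg _) (by linarith)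

theorem one_sub_conj_mul_ne_zero {c z : ℂ} (hc : ‖c‖ < 1) (hz : ‖z‖ < 1) :
    1 - conj c * z ≠ 0 :=
  norm_pos_iff.1 ((norm_nonneg _).trans_lt (norm_sub_lt_norm_one_sub_conj_mul hc hz))

theorem norm_diskMobius_lt_one {c z : ℂ} (hc : ‖c‖ < 1) (hz : ‖z‖ < 1) :
    ‖diskMobius c z‖ < 1 := by
  rw [diskMobius, norm_div, div_lt_one (norm_pos_iff.2 (one_sub_conj_mul_ne_zero hc hz))]
  exact norm_sub_lt_norm_one_sub_conj_mul hc hz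

theorem hasDerivAt_diskMobius_self {c : ℂ} (hc : ‖c‖ < 1) :
    HasDerivAt (diskMobius c) ((1 - ‖c‖ ^ 2 : ℝ) : ℂ)⁻¹ c := by
  have hconj : 1 - conj c * c = ((1 - ‖c‖ ^ 2 : ℝ) : ℂ) := by
    rw [mul_comm, Complex.mul_conj, Complex.normSq_eq_norm_sq]; push_cast; ring
  have hden : ((1 - ‖c‖ ^ 2 : ℝ) : ℂ) ≠ 0 := by
    rw [← hconj]; exact one_sub_conj_mul_ne_zero hc hc
  refine (((hasDerivAt_id' c).sub_const c).div
    (((hasDerivAt_id' c).const_mul (conj c)).const_sub 1) (hconj ▸ hden)).congr_deriv ?_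
  rw [sub_self, zero_mul, sub_zero, hconj, one_mul]
  field_simp

theorem differentiableAt_diskMobius {c z : ℂ} (h : 1 - conj c * z ≠ 0) :
    DifferentiableAt ℂ (diskMobius c) z :=
  (differentiableAt_id.sub_const c).div ((differentiableAt_id.const_mul (conj c)).const_sub 1) h

theorem diskMobius_self (c : ℂ) : diskMobius c c = 0 := by
  simp [diskMobius]

theorem norm_deriv_le_one_sub_sq_norm_of_mapsTo_ball {f : ℂ → ℂ}
    (hd : DifferentiableOn ℂ f (ball 0 1)) (hmaps : MapsTo f (ball 0 1) (ball 0 1)) :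
    ‖deriv f 0‖ ≤ 1 - ‖f 0‖ ^ 2 := by
  have h0 : (0 : ℂ) ∈ ball (0 : ℂ) 1 := mem_ball_self one_pos
  have hc : ‖f 0‖ < 1 := mem_ball_zero_iff.1 (hmaps h0)
  have hpos : 0 < 1 - ‖f 0‖ ^ 2 := by nlinarith [norm_nonneg (f 0)]
  set φ := fun z => diskMobius (f 0) (f z)
  have hφd : DifferentiableOn ℂ φ (ball 0 1) := by
    intro z hz
    have hfz := mem_ball_zero_iff.1 (hmaps hz)
    exact ((differentiableAt_diskMobius (one_sub_conj_mul_ne_zero hc hfz)).comp z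
      (hd.differentiableAt (isOpen_ball.mem_nhds hz))).differentiableWithinAt
  have hφmaps : MapsTo φ (ball 0 1) (closedBall (φ 0) 1) := by
    intro z hz
    simp only [φ, diskMobius_self, mem_closedBall_zero_iff]
    exact (norm_diskMobius_lt_one hc (mem_ball_zero_iff.1 (hmaps hz))).le
  have hderiv : deriv φ 0 = ((1 - ‖f 0‖ ^ 2 : ℝ) : ℂ)⁻¹ * deriv f 0 :=
    ((hasDerivAt_diskMobius_self hc).comp 0
      (hd.differentiableAt (isOpen_ball.mem_nhds h0)).hasDerivAt).deriv
  have := Complex.norm_deriv_le_one_of_mapsTo_ball hφd hφmaps one_pos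
  rwa [hderiv, norm_mul, norm_inv, Complex.norm_real, Real.norm_of_nonneg hpos.le,
    inv_mul_le_iff₀ hpos, mul_one] at this

theorem norm_deriv_le_of_abs_re_lt_one {F : ℂ → ℂ} (hF : DifferentiableOn ℂ F (ball 0 1))
    (hstrip : ∀ z ∈ ball (0 : ℂ) 1, |(F z).re| < 1) :
    ‖deriv F 0‖ ≤ 4 / π * Real.cos (π / 2 * (F 0).re) := by
  set ζ : ℂ → ℂ := fun z => ((π / 4 : ℝ) : ℂ) * F z
  have hζre : ∀ z, 2 * (ζ z).re = π / 2 * (F z).re := fun z => by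
    rw [Complex.re_ofReal_mul]; ring
  have hcos2 : ∀ z ∈ ball (0 : ℂ) 1, 0 < Real.cos (2 * (ζ z).re) := by
    intro z hz
    obtain ⟨hlo, hhi⟩ := abs_lt.1 (hstrip z hz)
    rw [hζre]
    apply Real.cos_pos_of_mem_Ioo
    constructor <;> nlinarith [pi_pos]
  have hcos z (hz : z ∈ ball (0 : ℂ) 1) : Complex.cos (ζ z) ≠ 0 :=
    Complex.cos_ne_zero_of_cos_two_re_pos (hcos2 z hz)
  have hg z (hz : z ∈ ball (0 : ℂ) 1) : HasDerivAt (fun w => Complex.tan (ζ w))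
      (1 / Complex.cos (ζ z) ^ 2 * ((π / 4 : ℝ) * deriv F z)) z :=
    (Complex.hasDerivAt_tan (hcos z hz)).comp z
      ((hF.differentiableAt (isOpen_ball.mem_nhds hz)).hasDerivAt.const_mul _)
  have h0 : (0 : ℂ) ∈ ball (0 : ℂ) 1 := mem_ball_self one_pos
  have hpick := norm_deriv_le_one_sub_sq_norm_of_mapsTo_ball
    (fun z hz => (hg z hz).differentiableAt.differentiableWithinAt)
    (fun z hz => mem_ball_zero_iff.2 (Complex.norm_tan_lt_one (hcos2 z hz)))
  have hcos0 : 0 < ‖Complex.cos (ζ 0)‖ ^ 2 := by have := hcos 0 h0; positivity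
  rw [(hg 0 h0).deriv, Complex.one_sub_sq_norm_tan (hcos 0 h0), norm_mul, norm_div, norm_one,
    norm_pow, norm_mul, Complex.norm_real, Real.norm_of_nonneg (by positivity), one_div,
    ← div_eq_inv_mul, div_le_div_iff_of_pos_right hcos0, hζre] at hpick
  rw [div_mul_eq_mul_div, le_div_iff₀ pi_pos]
  linarith

theorem norm_fderiv_re_le {E : Type*} [NormedAddCommGroup E] [NormedSpace ℂ E] {F : E → ℂ}
    {z : E} (hF : DifferentiableAt ℂ F z) :
    ‖fderiv ℝ (fun w => (F w).re) z‖ ≤ ‖fderiv ℂ F z‖ := by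
  have hd : HasFDerivAt (fun w => (F w).re)
      (Complex.reCLM.comp ((fderiv ℂ F z).restrictScalars ℝ)) z :=
    Complex.reCLM.hasFDerivAt.comp z (hF.hasFDerivAt.restrictScalars ℝ)
  rw [hd.fderiv]
  calc _ ≤ ‖Complex.reCLM‖ * ‖(fderiv ℂ F z).restrictScalars ℝ‖ :=
        ContinuousLinearMap.opNorm_comp_le _ _
    _ = ‖fderiv ℂ F z‖ := by
      rw [Complex.reCLM_norm, ContinuousLinearMap.norm_restrictScalars, one_mul]

/-- Gradient estimate at the origin: if `h` is a real-valued harmonic function on the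
unit disk with values in `(-1,1)` and `h 0 = a`, then `|∇h(0)| ≤ (4/π)·sin (π(a+1)/2)`.
Harmonicity is encoded by `h` being the real part of a holomorphic function `F`. -/
theorem harmonic_gradient_bound_at_zero (a : ℝ) (h : ℂ → ℝ) (F : ℂ → ℂ)
    (hF : DifferentiableOn ℂ F (Metric.ball 0 1))
    (hre : ∀ z ∈ Metric.ball (0 : ℂ) 1, h z = (F z).re)
    (hmaps : Set.MapsTo h (Metric.ball 0 1) (Set.Ioo (-1 : ℝ) 1))
    (h0 : h 0 = a) :
    ‖fderiv ℝ h 0‖ ≤ (4 / Real.pi) * Real.sin (Real.pi * (a + 1) / 2) := by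
  have hball : ball (0 : ℂ) 1 ∈ 𝓝 0 := ball_mem_nhds 0 one_pos
  have hh : h =ᶠ[𝓝 0] fun z => (F z).re := Filter.eventually_of_mem hball hre
  have hstrip : ∀ z ∈ ball (0 : ℂ) 1, |(F z).re| < 1 := fun z hz =>
    abs_lt.2 (hre z hz ▸ hmaps hz)
  have hFa : (F 0).re = a := by rw [← hre 0 (mem_of_mem_nhds hball), h0]
  calc ‖fderiv ℝ h 0‖ = ‖fderiv ℝ (fun z => (F z).re) 0‖ := by rw [hh.fderiv_eq]
    _ ≤ ‖fderiv ℂ F 0‖ := norm_fderiv_re_le (hF.differentiableAt hball)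
    _ = ‖deriv F 0‖ := norm_deriv_eq_norm_fderiv.symm
    _ ≤ 4 / π * Real.cos (π / 2 * (F 0).re) := norm_deriv_le_of_abs_re_lt_one hF hstrip
    _ = 4 / π * Real.sin (π * (a + 1) / 2) := by
      rw [hFa, ← Real.sin_add_pi_div_two]; congr 2; ring
end

section
/- For a ∈ (-1,1), the supremum of |∇h(0)| over all real-valued harmonic maps h : 𝔻 → (-1,1) with h(0) = a equals (4/π)·sin(π(a+1)/2), and it is attained by the real part of a suitable conformal map of 𝔻 onto the strip (-1,1) × ℝ. -/
/-!
The map `w ↦ exp (iπw/2)` sends the strip `|Re w| < 1` onto the right half-plane, and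
`Re exp (iπw/2) = |exp (iπw/2)| cos (π Re w / 2)`. If `g` maps the disk of radius `R` about `c`
holomorphically into the right half-plane, the Schwarz lemma for the Möbius map
`(g - p) / (g + p̄)`, `p = g c`, gives `|g'(c)| R ≤ 2 Re p`. For `g = exp (iπF/2)` this is
`|F'(c)| R ≤ (4/π) cos (π Re F(c) / 2)`, and `|∇ Re F| = |F'|`. Equality holds for
`F z = (-2i/π) log ((p + p̄ z) / (1 - z))` with `p = exp (iπa/2)`: it inverts both maps, so it
sends the disk conformally onto the strip and `0` to `a`.
-/

open Real Set Metric
open Complex (I normSq arg slitPlane)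
open ComplexConjugate

noncomputable section

def rightHalfPlane : Set ℂ := {ζ | 0 < ζ.re}

def unitStrip : Set ℂ := {w | -1 < w.re ∧ w.re < 1}

theorem norm_fderiv_re_comp {F : ℂ → ℂ} {z : ℂ} (hF : DifferentiableAt ℂ F z) :
    ‖fderiv ℝ (fun w => (F w).re) z‖ = ‖deriv F z‖ := by
  have hre : Complex.reCLM.comp (deriv F z • (1 : ℂ →L[ℝ] ℂ)) =
      innerSL ℝ (conj (deriv F z)) := by
    ext w
    simp [Complex.inner, mul_comm]
  have hF' : HasFDerivAt (fun w => (F w).re) _ z :=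
    Complex.reCLM.hasFDerivAt.comp z hF.hasDerivAt.complexToReal_fderiv
  rw [hF'.fderiv, hre, innerSL_apply_norm, Complex.norm_conj]

theorem normSq_add_conj_sub_normSq_sub (ζ p : ℂ) :
    normSq (ζ + conj p) - normSq (ζ - p) = 4 * ζ.re * p.re := by
  simp only [Complex.normSq_apply, Complex.add_re, Complex.add_im, Complex.sub_re,
    Complex.sub_im, Complex.conj_re, Complex.conj_im]
  ring

def halfPlaneToDisk (p ζ : ℂ) : ℂ := (ζ - p) / (ζ + conj p)

def diskToHalfPlane (p z : ℂ) : ℂ := (p + conj p * z) / (1 - z)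

section HalfPlane

variable {p : ℂ}

theorem add_conj_ne_zero_of_re_pos {ζ : ℂ} (hζ : 0 < ζ.re) (hp : 0 < p.re) :
    ζ + conj p ≠ 0 :=
  ne_of_apply_ne Complex.re <| by
    rw [Complex.add_re, Complex.conj_re, Complex.zero_re]
    linarith

theorem mapsTo_halfPlaneToDisk (hp : 0 < p.re) :
    MapsTo (halfPlaneToDisk p) rightHalfPlane (ball 0 1) := by
  intro ζ (hζ : 0 < ζ.re)
  have hne := add_conj_ne_zero_of_re_pos hζ hp
  have key := normSq_add_conj_sub_normSq_sub ζ p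
  rw [mem_ball_zero_iff, halfPlaneToDisk, norm_div, div_lt_one (norm_pos_iff.mpr hne),
    ← sq_lt_sq₀ (norm_nonneg _) (norm_nonneg _), Complex.sq_norm, Complex.sq_norm]
  nlinarith

theorem re_diskToHalfPlane (z : ℂ) :
    (diskToHalfPlane p z).re = p.re * (1 - normSq z) / normSq (1 - z) := by
  simp only [diskToHalfPlane, Complex.div_re, Complex.normSq_apply, Complex.add_re,
    Complex.add_im, Complex.sub_re, Complex.sub_im, Complex.mul_re, Complex.mul_im,
    Complex.conj_re, Complex.conj_im, Complex.one_re, Complex.one_im]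
  ring

theorem one_sub_ne_zero_of_mem_ball {z : ℂ} (hz : z ∈ ball (0 : ℂ) 1) : 1 - z ≠ 0 := by
  rw [sub_ne_zero]
  rintro rfl
  simp at hz

theorem mapsTo_diskToHalfPlane (hp : 0 < p.re) :
    MapsTo (diskToHalfPlane p) (ball 0 1) rightHalfPlane := by
  intro z hz
  have hz' : normSq z < 1 := by
    rw [mem_ball_zero_iff] at hz
    rw [← Complex.sq_norm]
    nlinarith [norm_nonneg z]
  change 0 < (diskToHalfPlane p z).re
  rw [re_diskToHalfPlane]
  exact div_pos (mul_pos hp (by linarith))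
    (Complex.normSq_pos.mpr (one_sub_ne_zero_of_mem_ball hz))

theorem invOn_diskToHalfPlane (hp : 0 < p.re) :
    InvOn (halfPlaneToDisk p) (diskToHalfPlane p) (ball 0 1) rightHalfPlane := by
  have hpp := add_conj_ne_zero_of_re_pos hp hp
  constructor
  · intro z hz
    have hne := one_sub_ne_zero_of_mem_ball hz
    rw [diskToHalfPlane, halfPlaneToDisk]
    field_simp
    rw [show p + conj p * z + conj p * (1 - z) = p + conj p by ring]
    field_simp
    ring
  · intro ζ (hζ : 0 < ζ.re)
    have hne := add_conj_ne_zero_of_re_pos hζ hp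
    rw [diskToHalfPlane, halfPlaneToDisk]
    field_simp
    rw [show ζ + conj p - (ζ - p) = p + conj p by ring]
    field_simp
    ring

theorem bijOn_diskToHalfPlane (hp : 0 < p.re) :
    BijOn (diskToHalfPlane p) (ball 0 1) rightHalfPlane :=
  (invOn_diskToHalfPlane hp).bijOn (mapsTo_diskToHalfPlane hp) (mapsTo_halfPlaneToDisk hp)

theorem differentiableOn_diskToHalfPlane :
    DifferentiableOn ℂ (diskToHalfPlane p) (ball 0 1) := fun _ hz =>
  (((differentiableAt_id.const_mul (conj p)).const_add p).div
    (differentiableAt_id.const_sub 1) (one_sub_ne_zero_of_mem_ball hz)).differentiableWithinAt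

theorem diskToHalfPlane_zero : diskToHalfPlane p 0 = p := by
  simp [diskToHalfPlane]

theorem hasDerivAt_diskToHalfPlane_zero : HasDerivAt (diskToHalfPlane p) (2 * p.re : ℝ) 0 := by
  have := (((hasDerivAt_id' (0 : ℂ)).const_mul (conj p)).const_add p).div
    ((hasDerivAt_id' (0 : ℂ)).const_sub 1) (by simp)
  refine this.congr_deriv ?_
  simp only [mul_one, sub_zero, mul_zero, add_zero, mul_neg, sub_neg_eq_add, one_pow, div_one]
  rw [add_comm]
  exact_mod_cast Complex.add_conj p

theorem differentiableOn_halfPlaneToDisk (hp : 0 < p.re) :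
    DifferentiableOn ℂ (halfPlaneToDisk p) rightHalfPlane := fun ζ (hζ : 0 < ζ.re) =>
  ((differentiableAt_id.sub_const p).div (differentiableAt_id.add_const (conj p))
    (add_conj_ne_zero_of_re_pos hζ hp)).differentiableWithinAt

theorem halfPlaneToDisk_self : halfPlaneToDisk p p = 0 := by
  simp [halfPlaneToDisk]

theorem hasDerivAt_halfPlaneToDisk_self (hp : 0 < p.re) :
    HasDerivAt (halfPlaneToDisk p) ((2 * p.re : ℝ) : ℂ)⁻¹ p := by
  have hpp := add_conj_ne_zero_of_re_pos hp hp
  have := ((hasDerivAt_id' p).sub_const p).div ((hasDerivAt_id' p).add_const (conj p)) hpp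
  refine this.congr_deriv ?_
  rw [← Complex.add_conj]
  field_simp
  ring

end HalfPlane

theorem norm_deriv_mul_le_of_mapsTo_rightHalfPlane {g : ℂ → ℂ} {c : ℂ} {R : ℝ}
    (hg : DifferentiableOn ℂ g (ball c R)) (hmaps : MapsTo g (ball c R) rightHalfPlane)
    (hR : 0 < R) : ‖deriv g c‖ * R ≤ 2 * (g c).re := by
  set p := g c
  have hp : 0 < p.re := hmaps (mem_ball_self hR)
  have hgc : HasDerivAt g (deriv g c) c :=
    (hg.differentiableAt (isOpen_ball.mem_nhds (mem_ball_self hR))).hasDerivAt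
  have hu : HasDerivAt (halfPlaneToDisk p ∘ g) (((2 * p.re : ℝ) : ℂ)⁻¹ * deriv g c) c :=
    (hasDerivAt_halfPlaneToDisk_self hp).comp c hgc
  have hu_diff : DifferentiableOn ℂ (halfPlaneToDisk p ∘ g) (ball c R) :=
    (differentiableOn_halfPlaneToDisk hp).comp hg hmaps
  have hu_maps : MapsTo (halfPlaneToDisk p ∘ g) (ball c R)
      (closedBall (halfPlaneToDisk p (g c)) 1) := by
    rw [halfPlaneToDisk_self]
    exact ((mapsTo_halfPlaneToDisk hp).comp hmaps).mono_right ball_subset_closedBall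
  have schwarz := Complex.norm_deriv_le_div_of_mapsTo_ball hu_diff hu_maps hR
  rw [hu.deriv, norm_mul, norm_inv, Complex.norm_real,
    Real.norm_of_nonneg (by positivity)] at schwarz
  rwa [inv_mul_eq_div, div_le_div_iff₀ (by positivity) hR, one_mul] at schwarz

def stripToHalfPlane (w : ℂ) : ℂ := Complex.exp ((π / 2 : ℝ) * (I * w))

def halfPlaneToStrip (ζ : ℂ) : ℂ := -I * (2 / π : ℝ) * Complex.log ζ

theorem re_stripToHalfPlane (w : ℂ) :
    (stripToHalfPlane w).re = ‖stripToHalfPlane w‖ * Real.cos (π / 2 * w.re) := by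
  simp [stripToHalfPlane, Complex.exp_re, Complex.norm_exp]

theorem cos_pos_of_mem_unitStrip {w : ℂ} (hw : w ∈ unitStrip) :
    0 < Real.cos (π / 2 * w.re) := by
  obtain ⟨h₁, h₂⟩ := hw
  apply Real.cos_pos_of_mem_Ioo
  constructor <;> nlinarith [pi_pos]

theorem mapsTo_stripToHalfPlane : MapsTo stripToHalfPlane unitStrip rightHalfPlane := by
  intro w hw
  change 0 < (stripToHalfPlane w).re
  rw [re_stripToHalfPlane]
  exact mul_pos (by simp [stripToHalfPlane]) (cos_pos_of_mem_unitStrip hw)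

theorem re_halfPlaneToStrip (ζ : ℂ) : (halfPlaneToStrip ζ).re = 2 / π * arg ζ := by
  simp [halfPlaneToStrip, Complex.log_im]

theorem mapsTo_halfPlaneToStrip : MapsTo halfPlaneToStrip rightHalfPlane unitStrip := by
  intro ζ (hζ : 0 < ζ.re)
  have harg := abs_lt.mp (Complex.abs_arg_lt_pi_div_two_iff.mpr (Or.inl hζ))
  change -1 < (halfPlaneToStrip ζ).re ∧ (halfPlaneToStrip ζ).re < 1
  rw [re_halfPlaneToStrip]
  have hπ := pi_pos
  constructor
  · rw [div_mul_eq_mul_div, lt_div_iff₀ hπ]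
    linarith
  · rw [div_mul_eq_mul_div, div_lt_iff₀ hπ]
    linarith

theorem invOn_halfPlaneToStrip :
    InvOn stripToHalfPlane halfPlaneToStrip rightHalfPlane unitStrip := by
  constructor
  · intro ζ (hζ : 0 < ζ.re)
    have hne : ζ ≠ 0 := by rintro rfl; simp at hζ
    have hπ : (π : ℂ) ≠ 0 := Complex.ofReal_ne_zero.mpr pi_ne_zero
    rw [stripToHalfPlane, halfPlaneToStrip,
      show ((π / 2 : ℝ) : ℂ) * (I * (-I * (2 / π : ℝ) * Complex.log ζ)) = Complex.log ζ by
        push_cast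
        field_simp
        linear_combination -Complex.log ζ * Complex.I_sq,
      Complex.exp_log hne]
  · intro w hw
    obtain ⟨h₁, h₂⟩ := hw
    have hπ : (π : ℂ) ≠ 0 := Complex.ofReal_ne_zero.mpr pi_ne_zero
    have him : (((π / 2 : ℝ) : ℂ) * (I * w)).im = π / 2 * w.re := by simp
    rw [stripToHalfPlane, halfPlaneToStrip, Complex.log_exp (by rw [him]; nlinarith [pi_pos])
      (by rw [him]; nlinarith [pi_pos])]
    push_cast
    field_simp
    linear_combination -w * Complex.I_sq

theorem bijOn_halfPlaneToStrip : BijOn halfPlaneToStrip rightHalfPlane unitStrip :=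
  invOn_halfPlaneToStrip.bijOn mapsTo_halfPlaneToStrip mapsTo_stripToHalfPlane

theorem hasDerivAt_stripToHalfPlane (w : ℂ) :
    HasDerivAt stripToHalfPlane (stripToHalfPlane w * ((π / 2 : ℝ) * I)) w := by
  refine (((hasDerivAt_id' w).const_mul I).const_mul ((π / 2 : ℝ) : ℂ)).cexp.congr_deriv ?_
  rw [mul_one]
  rfl

theorem differentiable_stripToHalfPlane : Differentiable ℂ stripToHalfPlane :=
  fun w => (hasDerivAt_stripToHalfPlane w).differentiableAt

theorem hasDerivAt_halfPlaneToStrip {ζ : ℂ} (hζ : ζ ∈ slitPlane) :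
    HasDerivAt halfPlaneToStrip (-I * (2 / π : ℝ) * ζ⁻¹) ζ :=
  (Complex.hasDerivAt_log hζ).const_mul _

theorem differentiableOn_halfPlaneToStrip : DifferentiableOn ℂ halfPlaneToStrip rightHalfPlane :=
  fun _ hζ => (hasDerivAt_halfPlaneToStrip (Or.inl hζ)).differentiableAt.differentiableWithinAt

theorem norm_deriv_mul_le_of_mapsTo_unitStrip {F : ℂ → ℂ} {c : ℂ} {R : ℝ}
    (hF : DifferentiableOn ℂ F (ball c R)) (hmaps : MapsTo F (ball c R) unitStrip)
    (hR : 0 < R) : ‖deriv F c‖ * R ≤ 4 / π * Real.cos (π / 2 * (F c).re) := by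
  have hFc : HasDerivAt F (deriv F c) c :=
    (hF.differentiableAt (isOpen_ball.mem_nhds (mem_ball_self hR))).hasDerivAt
  have hg := (hasDerivAt_stripToHalfPlane (F c)).comp c hFc
  have hbound := norm_deriv_mul_le_of_mapsTo_rightHalfPlane
    (differentiable_stripToHalfPlane.comp_differentiableOn hF)
    (mapsTo_stripToHalfPlane.comp hmaps) hR
  have hπ : ‖((π / 2 : ℝ) : ℂ) * I‖ = π / 2 := by simp [abs_of_pos pi_pos]
  have hpos : 0 < ‖stripToHalfPlane (F c)‖ := by simp [stripToHalfPlane]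
  rw [hg.deriv, Function.comp_apply, re_stripToHalfPlane, norm_mul, norm_mul, hπ] at hbound
  rw [div_mul_eq_mul_div, le_div_iff₀ pi_pos]
  nlinarith

def diskToStrip (w₀ : ℂ) : ℂ → ℂ :=
  halfPlaneToStrip ∘ diskToHalfPlane (stripToHalfPlane w₀)

section DiskToStrip

variable {w₀ : ℂ}

theorem bijOn_diskToStrip (hw₀ : w₀ ∈ unitStrip) :
    BijOn (diskToStrip w₀) (ball 0 1) unitStrip :=
  bijOn_halfPlaneToStrip.comp (bijOn_diskToHalfPlane (mapsTo_stripToHalfPlane hw₀))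

theorem differentiableOn_diskToStrip (hw₀ : w₀ ∈ unitStrip) :
    DifferentiableOn ℂ (diskToStrip w₀) (ball 0 1) :=
  differentiableOn_halfPlaneToStrip.comp differentiableOn_diskToHalfPlane
    (mapsTo_diskToHalfPlane (mapsTo_stripToHalfPlane hw₀))

theorem diskToStrip_zero (hw₀ : w₀ ∈ unitStrip) : diskToStrip w₀ 0 = w₀ := by
  rw [diskToStrip, Function.comp_apply, diskToHalfPlane_zero, invOn_halfPlaneToStrip.2 hw₀]

theorem norm_deriv_diskToStrip_zero (hw₀ : w₀ ∈ unitStrip) :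
    ‖deriv (diskToStrip w₀) 0‖ = 4 / π * Real.cos (π / 2 * w₀.re) := by
  have hp : 0 < (stripToHalfPlane w₀).re := mapsTo_stripToHalfPlane hw₀
  have hpos : 0 < ‖stripToHalfPlane w₀‖ := by simp [stripToHalfPlane]
  have hf := (hasDerivAt_halfPlaneToStrip (ζ := diskToHalfPlane (stripToHalfPlane w₀) 0) (by
    rw [diskToHalfPlane_zero]; exact Or.inl hp)).comp 0 hasDerivAt_diskToHalfPlane_zero
  rw [diskToStrip, hf.deriv, diskToHalfPlane_zero, norm_mul, norm_mul, norm_mul, norm_neg,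
    Complex.norm_I, norm_inv, Complex.norm_real, Complex.norm_real,
    Real.norm_of_nonneg (by positivity), Real.norm_of_nonneg (by positivity), re_stripToHalfPlane]
  field_simp
  ring

end DiskToStrip

end

theorem sin_pi_mul_add_one_div_two (x : ℝ) :
    Real.sin (π * (x + 1) / 2) = Real.cos (π / 2 * x) := by
  rw [← Real.sin_add_pi_div_two]
  ring_nf

/-- For `a ∈ (-1,1)`, the supremum of `|∇h(0)|` over all real-valued harmonic maps
`h : 𝔻 → (-1,1)` with `h 0 = a` equals `(4/π)·sin (π(a+1)/2)` (and is attained),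
the extremal being the real part of a conformal map of the disk onto the strip
`(-1,1) × ℝ` sending `0` to `a`. -/
theorem harmonic_gradient_sup (a : ℝ) (ha : a ∈ Set.Ioo (-1 : ℝ) 1) :
    IsGreatest {L : ℝ | ∃ (h : ℂ → ℝ) (F : ℂ → ℂ),
        DifferentiableOn ℂ F (Metric.ball 0 1) ∧
        (∀ z ∈ Metric.ball (0 : ℂ) 1, h z = (F z).re) ∧
        Set.MapsTo h (Metric.ball 0 1) (Set.Ioo (-1 : ℝ) 1) ∧ h 0 = a ∧
        L = ‖fderiv ℝ h 0‖}
      ((4 / Real.pi) * Real.sin (Real.pi * (a + 1) / 2)) ∧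
    ∃ f : ℂ → ℂ, DifferentiableOn ℂ f (Metric.ball 0 1) ∧
      Set.InjOn f (Metric.ball 0 1) ∧
      f '' (Metric.ball 0 1) = {w : ℂ | -1 < w.re ∧ w.re < 1} ∧
      f 0 = (a : ℂ) ∧
      ‖fderiv ℝ (fun z => (f z).re) 0‖ = (4 / Real.pi) * Real.sin (Real.pi * (a + 1) / 2) := by
  have ha' : (a : ℂ) ∈ unitStrip := by simpa [unitStrip] using ha
  have h0 : (0 : ℂ) ∈ ball (0 : ℂ) 1 := mem_ball_self one_pos
  have hext :
      ‖fderiv ℝ (fun z => (diskToStrip a z).re) 0‖ = 4 / π * Real.cos (π / 2 * a) := by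
    rw [norm_fderiv_re_comp ((differentiableOn_diskToStrip ha').differentiableAt
      (isOpen_ball.mem_nhds h0)), norm_deriv_diskToStrip_zero ha', Complex.ofReal_re]
  rw [sin_pi_mul_add_one_div_two]
  refine ⟨⟨⟨_, diskToStrip a, differentiableOn_diskToStrip ha', fun _ _ => rfl,
      fun z hz => (bijOn_diskToStrip ha').mapsTo hz, by simp [diskToStrip_zero ha'],
      hext.symm⟩, ?_⟩,
    diskToStrip a, differentiableOn_diskToStrip ha', (bijOn_diskToStrip ha').injOn,
    (bijOn_diskToStrip ha').image_eq, diskToStrip_zero ha', hext⟩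
  rintro _ ⟨h, F, hF, hre, hmaps, rfl, rfl⟩
  have hFh : h =ᶠ[nhds 0] fun z => (F z).re :=
    Filter.eventuallyEq_of_mem (isOpen_ball.mem_nhds h0) hre
  have hFstrip : MapsTo F (ball 0 1) unitStrip := fun z hz => by
    simpa [unitStrip, hre z hz] using hmaps hz
  rw [hFh.fderiv_eq, norm_fderiv_re_comp (hF.differentiableAt (isOpen_ball.mem_nhds h0)),
    hre 0 h0]
  simpa using norm_deriv_mul_le_of_mapsTo_unitStrip hF hFstrip one_pos
end

section
/- If h : 𝔻 → (-1,1) is a real-valued harmonic function with h(a) = b for some a ∈ 𝔻, then |∇h(a)| ≤ (4/π)·sin(π(|b|+1)/2)/(1−|a|²). -/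
open Real Set Metric

/-!
Write `h = Re F` with `F` holomorphic, so `|∇h(a)| ≤ |F'(a)|`, and `F` maps the disc into the
strip `|Re w| < 1`. The map `w ↦ tan (π w / 4)` sends that strip into the disc, so
`G = tan (π F / 4)` is a self-map of the disc, and the Schwarz–Pick inequality
`|G'(a)| (1 - |a|²) ≤ 1 - |G(a)|²` (the Schwarz lemma conjugated by the disc automorphisms
`z ↦ (z - c) / (1 - c̄ z)`) applies. With `w = π F(a) / 4` the chain rule gives
`|G'(a)| = (π/4) |F'(a)| / |cos w|²`, and `(1 - |tan w|²) |cos w|² = |cos w|² - |sin w|² =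
cos (2 Re w) = cos (π b / 2) = sin (π (|b| + 1) / 2)`.
-/

namespace Complex

open ComplexConjugate

noncomputable def diskMobius (c z : ℂ) : ℂ := (z - c) / (1 - conj c * z)

section DiskMobius

variable {c z : ℂ}

lemma one_sub_conj_mul_ne_zero (hc : ‖c‖ < 1) (hz : ‖z‖ < 1) : 1 - conj c * z ≠ 0 := by
  refine sub_ne_zero.2 fun h => ?_
  have : ‖conj c * z‖ < 1 := by
    rw [norm_mul, RCLike.norm_conj]
    exact mul_lt_one_of_nonneg_of_lt_one_left (norm_nonneg c) hc hz.le
  rw [← h, norm_one] at this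
  exact this.false

lemma normSq_one_sub_conj_mul_sub_normSq_sub (c z : ℂ) :
    normSq (1 - conj c * z) - normSq (z - c) = (1 - normSq c) * (1 - normSq z) := by
  simp only [normSq_apply, sub_re, sub_im, mul_re, mul_im, one_re, one_im, conj_re, conj_im]
  ring

lemma norm_diskMobius_lt_one (hc : ‖c‖ < 1) (hz : ‖z‖ < 1) : ‖diskMobius c z‖ < 1 := by
  rw [diskMobius, norm_div, div_lt_one (norm_pos_iff.2 (one_sub_conj_mul_ne_zero hc hz)),
    ← sq_lt_sq₀ (norm_nonneg _) (norm_nonneg _), ← normSq_eq_norm_sq, ← normSq_eq_norm_sq,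
    ← sub_pos, normSq_one_sub_conj_mul_sub_normSq_sub, normSq_eq_norm_sq, normSq_eq_norm_sq]
  apply mul_pos <;> nlinarith [norm_nonneg c, norm_nonneg z]

lemma mapsTo_diskMobius (hc : ‖c‖ < 1) : MapsTo (diskMobius c) (ball 0 1) (ball 0 1) :=
  fun _ hz => mem_ball_zero_iff.2 (norm_diskMobius_lt_one hc (mem_ball_zero_iff.1 hz))

lemma hasDerivAt_diskMobius (h : 1 - conj c * z ≠ 0) :
    HasDerivAt (diskMobius c) ((1 - ‖c‖ ^ 2 : ℝ) / (1 - conj c * z) ^ 2) z := by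
  refine (((hasDerivAt_id z).sub_const c).div
    (((hasDerivAt_id z).const_mul (conj c)).const_sub 1) h).congr_deriv ?_
  push_cast
  rw [← conj_mul']
  simp only [id]
  ring

lemma differentiableOn_diskMobius (hc : ‖c‖ < 1) :
    DifferentiableOn ℂ (diskMobius c) (ball 0 1) :=
  fun _ hz => (hasDerivAt_diskMobius (one_sub_conj_mul_ne_zero hc
    (mem_ball_zero_iff.1 hz))).differentiableAt.differentiableWithinAt

@[simp] lemma diskMobius_self (c : ℂ) : diskMobius c c = 0 := by simp [diskMobius]

@[simp] lemma diskMobius_neg_zero (c : ℂ) : diskMobius (-c) 0 = c := by simp [diskMobius]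

lemma hasDerivAt_diskMobius_self (hc : ‖c‖ < 1) :
    HasDerivAt (diskMobius c) ((1 - ‖c‖ ^ 2 : ℝ)⁻¹ : ℝ) c := by
  have hc2 : ((1 - ‖c‖ ^ 2 : ℝ) : ℂ) ≠ 0 := ofReal_ne_zero.2 (by nlinarith [norm_nonneg c])
  refine (hasDerivAt_diskMobius (one_sub_conj_mul_ne_zero hc hc)).congr_deriv ?_
  rw [conj_mul']
  push_cast at hc2 ⊢
  field_simp

lemma hasDerivAt_diskMobius_zero (c : ℂ) : HasDerivAt (diskMobius c) (1 - ‖c‖ ^ 2 : ℝ) 0 := by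
  simpa using hasDerivAt_diskMobius (c := c) (z := 0) (by simp)

end DiskMobius

theorem norm_deriv_mul_one_sub_sq_le_of_mapsTo_ball {G : ℂ → ℂ} {a : ℂ}
    (hG : DifferentiableOn ℂ G (ball 0 1)) (hmaps : MapsTo G (ball 0 1) (ball 0 1))
    (ha : a ∈ ball 0 1) :
    ‖deriv G a‖ * (1 - ‖a‖ ^ 2) ≤ 1 - ‖G a‖ ^ 2 := by
  have ha' := mem_ball_zero_iff.1 ha
  have hna : ‖-a‖ < 1 := by rwa [norm_neg]
  have hc := mem_ball_zero_iff.1 (hmaps ha)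
  set K := diskMobius (G a) ∘ G ∘ diskMobius (-a)
  have hK : DifferentiableOn ℂ K (ball 0 1) :=
    (differentiableOn_diskMobius hc).comp
      (hG.comp (differentiableOn_diskMobius hna) (mapsTo_diskMobius hna))
      (hmaps.comp (mapsTo_diskMobius hna))
  have hKmaps : MapsTo K (ball 0 1) (closedBall (K 0) 1) := by
    simpa [K] using
      ((mapsTo_diskMobius hc).comp (hmaps.comp (mapsTo_diskMobius hna))).mono_right
        ball_subset_closedBall
  have hKa : HasDerivAt K (((1 - ‖G a‖ ^ 2 : ℝ)⁻¹ : ℝ) * (deriv G a * (1 - ‖a‖ ^ 2 : ℝ))) 0 := by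
    have hφ := hasDerivAt_diskMobius_zero (-a)
    rw [norm_neg] at hφ
    have hGa := (hG.differentiableAt (isOpen_ball.mem_nhds ha)).hasDerivAt
    exact (hasDerivAt_diskMobius_self hc).comp_of_eq 0 (hGa.comp_of_eq 0 hφ (by simp)) (by simp)
  have hSchwarz := norm_deriv_le_div_of_mapsTo_ball hK hKmaps one_pos
  have h1 : 0 < 1 - ‖G a‖ ^ 2 := by nlinarith [norm_nonneg (G a)]
  have h2 : 0 < 1 - ‖a‖ ^ 2 := by nlinarith [norm_nonneg a]
  rwa [hKa.deriv, div_one, norm_mul, norm_mul, norm_real, norm_real, Real.norm_of_nonneg h2.le,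
    Real.norm_of_nonneg (inv_pos.2 h1).le, inv_mul_le_iff₀ h1, mul_one] at hSchwarz

lemma norm_cos_sq_sub_norm_sin_sq (z : ℂ) :
    ‖cos z‖ ^ 2 - ‖sin z‖ ^ 2 = Real.cos (2 * z.re) := by
  have h : cos (z + conj z) = ((‖cos z‖ ^ 2 - ‖sin z‖ ^ 2 : ℝ) : ℂ) := by
    rw [cos_add, cos_conj, sin_conj, mul_conj', mul_conj']
    push_cast
    ring
  rw [add_conj, ← ofReal_cos] at h
  exact_mod_cast h.symm

section Strip

variable {z : ℂ}

lemma norm_sin_lt_norm_cos (hz : |z.re| < π / 4) : ‖sin z‖ < ‖cos z‖ := by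
  have hcos : 0 < Real.cos (2 * z.re) := by
    obtain ⟨h₁, h₂⟩ := abs_lt.1 hz
    exact Real.cos_pos_of_mem_Ioo ⟨by linarith, by linarith⟩
  rw [← norm_cos_sq_sub_norm_sin_sq, sub_pos] at hcos
  exact (sq_lt_sq₀ (norm_nonneg _) (norm_nonneg _)).1 hcos

lemma cos_ne_zero_of_abs_re_lt (hz : |z.re| < π / 4) : cos z ≠ 0 :=
  norm_pos_iff.1 ((norm_nonneg _).trans_lt (norm_sin_lt_norm_cos hz))

lemma norm_tan_lt_one_s5 (hz : |z.re| < π / 4) : ‖tan z‖ < 1 := by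
  rw [tan_eq_sin_div_cos, norm_div, div_lt_one (norm_pos_iff.2 (cos_ne_zero_of_abs_re_lt hz))]
  exact norm_sin_lt_norm_cos hz

lemma one_sub_norm_tan_sq (hz : cos z ≠ 0) :
    1 - ‖tan z‖ ^ 2 = Real.cos (2 * z.re) / ‖cos z‖ ^ 2 := by
  have : ‖cos z‖ ≠ 0 := norm_ne_zero_iff.2 hz
  rw [← norm_cos_sq_sub_norm_sin_sq, tan_eq_sin_div_cos, norm_div]
  field_simp

end Strip

theorem norm_deriv_mul_one_sub_sq_le_of_abs_re_lt_one {F : ℂ → ℂ} {a : ℂ}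
    (hF : DifferentiableOn ℂ F (ball 0 1)) (hstrip : ∀ z ∈ ball 0 1, |(F z).re| < 1)
    (ha : a ∈ ball 0 1) :
    ‖deriv F a‖ * (1 - ‖a‖ ^ 2) ≤ 4 / π * Real.cos (π * (F a).re / 2) := by
  set w : ℂ → ℂ := fun z => ((π / 4 : ℝ) : ℂ) * F z
  have hw : ∀ z ∈ ball (0 : ℂ) 1, |(w z).re| < π / 4 := fun z hz => by
    rw [re_ofReal_mul, abs_mul, abs_of_pos (by positivity)]
    nlinarith [hstrip z hz, pi_pos]
  have hwa : HasDerivAt w (((π / 4 : ℝ) : ℂ) * deriv F a) a :=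
    (hF.differentiableAt (isOpen_ball.mem_nhds ha)).hasDerivAt.const_mul _
  have hG : DifferentiableOn ℂ (Complex.tan ∘ w) (ball 0 1) := fun z hz =>
    ((hasDerivAt_tan (cos_ne_zero_of_abs_re_lt (hw z hz))).differentiableAt.comp z
      ((hF.differentiableAt (isOpen_ball.mem_nhds hz)).const_mul _)).differentiableWithinAt
  have hGmaps : MapsTo (Complex.tan ∘ w) (ball 0 1) (ball 0 1) := fun z hz =>
    mem_ball_zero_iff.2 (norm_tan_lt_one_s5 (hw z hz))
  have hcos := cos_ne_zero_of_abs_re_lt (hw a ha)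
  have hpick := norm_deriv_mul_one_sub_sq_le_of_mapsTo_ball hG hGmaps ha
  rw [((hasDerivAt_tan hcos).comp a hwa).deriv, Function.comp_apply, one_sub_norm_tan_sq hcos,
    re_ofReal_mul, norm_mul, norm_mul, norm_div, norm_one, norm_pow, norm_real,
    Real.norm_of_nonneg (by positivity), le_div_iff₀ (by have := norm_pos_iff.2 hcos; positivity)]
    at hpick
  rw [show π * (F a).re / 2 = 2 * (π / 4 * (F a).re) by ring]
  calc ‖deriv F a‖ * (1 - ‖a‖ ^ 2)
      = 4 / π * (1 / ‖cos (w a)‖ ^ 2 * (π / 4 * ‖deriv F a‖) * (1 - ‖a‖ ^ 2)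
          * ‖cos (w a)‖ ^ 2) := by
        field_simp
    _ ≤ 4 / π * Real.cos (2 * (π / 4 * (F a).re)) := by gcongr

end Complex

lemma Real.sin_pi_mul_abs_add_one_div_two (b : ℝ) :
    sin (π * (|b| + 1) / 2) = cos (π * b / 2) := by
  rw [show π * (|b| + 1) / 2 = |π * b / 2| + π / 2 by
      rw [abs_div, abs_mul, abs_of_pos pi_pos, abs_two]; ring,
    sin_add_pi_div_two, cos_abs]

open Topology in
lemma HasDerivAt.norm_fderiv_le_of_eventuallyEq_re {h : ℂ → ℝ} {F : ℂ → ℂ} {a f' : ℂ}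
    (hF : HasDerivAt F f' a) (heq : h =ᶠ[𝓝 a] fun z => (F z).re) : ‖fderiv ℝ h a‖ ≤ ‖f'‖ := by
  rw [((Complex.reCLM.hasFDerivAt.comp a hF.complexToReal_fderiv).congr_of_eventuallyEq
    heq).fderiv]
  refine ContinuousLinearMap.opNorm_le_bound _ (norm_nonneg f') fun z => ?_
  simpa using Complex.abs_re_le_norm (f' * z)

/-- Gradient estimate at an interior point: if `h` is a real-valued harmonic function on
the unit disk with values in `(-1,1)` and `h a = b` for `a ∈ 𝔻`, then
`|∇h(a)| ≤ (4/π)·sin (π(|b|+1)/2)/(1-|a|²)`. -/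
theorem harmonic_gradient_bound (a : ℂ) (ha : a ∈ Metric.ball (0 : ℂ) 1) (b : ℝ)
    (h : ℂ → ℝ) (F : ℂ → ℂ)
    (hF : DifferentiableOn ℂ F (Metric.ball 0 1))
    (hre : ∀ z ∈ Metric.ball (0 : ℂ) 1, h z = (F z).re)
    (hmaps : Set.MapsTo h (Metric.ball 0 1) (Set.Ioo (-1 : ℝ) 1))
    (hab : h a = b) :
    ‖fderiv ℝ h a‖ ≤ (4 / Real.pi) * Real.sin (Real.pi * (|b| + 1) / 2) / (1 - ‖a‖ ^ 2) := by
  have hstrip : ∀ z ∈ ball (0 : ℂ) 1, |(F z).re| < 1 := fun z hz => by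
    rw [← hre z hz]
    exact abs_lt.2 (hmaps hz)
  have hgrad : ‖fderiv ℝ h a‖ ≤ ‖deriv F a‖ :=
    (hF.differentiableAt (isOpen_ball.mem_nhds ha)).hasDerivAt.norm_fderiv_le_of_eventuallyEq_re
      (Filter.eventually_of_mem (isOpen_ball.mem_nhds ha) hre)
  have ha' : 0 < 1 - ‖a‖ ^ 2 := by nlinarith [mem_ball_zero_iff.1 ha, norm_nonneg a]
  rw [Real.sin_pi_mul_abs_add_one_div_two, le_div_iff₀ ha', ← hab, hre a ha]
  calc ‖fderiv ℝ h a‖ * (1 - ‖a‖ ^ 2) ≤ ‖deriv F a‖ * (1 - ‖a‖ ^ 2) := by gcongr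
    _ ≤ 4 / π * Real.cos (π * (F a).re / 2) :=
      Complex.norm_deriv_mul_one_sub_sq_le_of_abs_re_lt_one hF hstrip ha
end

section
/- If f : 𝔻 → 𝔻 is a complex-valued harmonic map with f(0) = a, then |f(z)| ≤ (4/π)·arctan(s(|a|)·(1+|z|)/(1−|z|)) − 1 for all z ∈ 𝔻, where s(t) = tan(π(t+1)/4). -/
/-!
Pick a unimodular `λ` with `λ f(z) = |f(z)|`. Then `Re (λ f) = Re F` for the holomorphic
`F = λ g + conj λ · h`, which maps the disk into the strip `|Re| < 1`. The map `exp (iπ(F + 1)/2)`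
sends the disk into the upper half-plane with argument `2θ`, `θ = π (Re F + 1)/4`. By
Schwarz–Pick it stays in the hyperbolic disk of radius `log ((1 + |z|)/(1 - |z|))` around its
value at `0`; discarding the modulus, this bounds how far `log tan θ` (the signed distance to the
imaginary axis) can move: `(1 - |z|) tan θ(z) ≤ (1 + |z|) tan θ(0)`. Inverting `tan` gives the
bound.
-/

open Real Set Metric Complex ComplexConjugate

theorem sub_mul_le_add_mul_of_sq_sub_le {r X Y : ℝ} (hr : 0 ≤ r) (hX : 0 ≤ X) (hY : 0 ≤ Y)
    (h : (1 - r ^ 2) * (X - Y) ^ 2 ≤ 4 * r ^ 2 * X * Y) : (1 - r) * X ≤ (1 + r) * Y := by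
  have factor : (1 - r ^ 2) * (X - Y) ^ 2 - 4 * r ^ 2 * X * Y
      = ((1 - r) * X - (1 + r) * Y) * ((1 + r) * X - (1 - r) * Y) := by ring
  by_contra! hlt
  have : 0 < (1 + r) * X - (1 - r) * Y := by nlinarith
  nlinarith

theorem Complex.sq_norm_sub_conj (ζ ξ : ℂ) :
    ‖ζ - conj ξ‖ ^ 2 = ‖ζ - ξ‖ ^ 2 + 4 * ζ.im * ξ.im := by
  simp only [Complex.sq_norm, normSq_apply, sub_re, sub_im, conj_re, conj_im]
  ring

theorem Complex.sq_norm_exp_sub_exp (w w₀ : ℂ) :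
    ‖exp w - exp w₀‖ ^ 2 = (rexp w.re - rexp w₀.re) ^ 2
      + 2 * rexp w.re * rexp w₀.re * (1 - Real.cos (w.im - w₀.im)) := by
  simp only [Complex.sq_norm, normSq_apply, sub_re, sub_im, exp_re, exp_im, Real.cos_sub]
  linear_combination rexp w.re ^ 2 * Real.sin_sq_add_cos_sq w.im
    + rexp w₀.re ^ 2 * Real.sin_sq_add_cos_sq w₀.im

theorem Complex.one_sub_sq_mul_one_sub_cos_le {w w₀ : ℂ} {r : ℝ} (hr : r ^ 2 ≤ 1)
    (h : ‖exp w - exp w₀‖ ≤ r * ‖exp w - conj (exp w₀)‖) :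
    (1 - r ^ 2) * (1 - Real.cos (w.im - w₀.im)) ≤
      2 * r ^ 2 * Real.sin w.im * Real.sin w₀.im := by
  have hsq : ‖exp w - exp w₀‖ ^ 2 ≤ r ^ 2 * ‖exp w - conj (exp w₀)‖ ^ 2 := by
    rw [← mul_pow]; exact pow_le_pow_left₀ (norm_nonneg _) h 2
  rw [sq_norm_sub_conj, exp_im, exp_im, sq_norm_exp_sub_exp] at hsq
  have hE : 0 < 2 * rexp w.re * rexp w₀.re := by positivity
  -- the moduli drop out through `(e^a - e^a₀)² ≥ 0`
  refine le_of_mul_le_mul_left ?_ hE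
  nlinarith [mul_nonneg (sub_nonneg.mpr hr) (sq_nonneg (rexp w.re - rexp w₀.re))]

theorem Real.one_sub_mul_tan_half_le {α α₀ r : ℝ} (hα : α ∈ Ioo 0 π) (hα₀ : α₀ ∈ Ioo 0 π)
    (hr : 0 ≤ r) (h : (1 - r ^ 2) * (1 - cos (α - α₀)) ≤ 2 * r ^ 2 * sin α * sin α₀) :
    (1 - r) * tan (α / 2) ≤ (1 + r) * tan (α₀ / 2) := by
  obtain ⟨θ, rfl⟩ : ∃ θ, α = 2 * θ := ⟨α / 2, by ring⟩
  obtain ⟨θ₀, rfl⟩ : ∃ θ₀, α₀ = 2 * θ₀ := ⟨α₀ / 2, by ring⟩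
  obtain ⟨⟨hα_lo, hα_hi⟩, ⟨hα₀_lo, hα₀_hi⟩⟩ := And.intro hα hα₀
  have hc : 0 < cos θ := cos_pos_of_mem_Ioo ⟨by linarith [pi_pos], by linarith⟩
  have hc₀ : 0 < cos θ₀ := cos_pos_of_mem_Ioo ⟨by linarith [pi_pos], by linarith⟩
  have hs : 0 < sin θ := sin_pos_of_pos_of_lt_pi (by linarith) (by linarith [pi_pos])
  have hs₀ : 0 < sin θ₀ := sin_pos_of_pos_of_lt_pi (by linarith) (by linarith [pi_pos])
  have hX := sub_mul_le_add_mul_of_sq_sub_le hr (mul_pos hs hc₀).le (mul_pos hc hs₀).le (by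
    rw [show 2 * θ - 2 * θ₀ = 2 * (θ - θ₀) by ring, cos_two_mul, cos_sq', sin_sub,
      sin_two_mul, sin_two_mul] at h
    linear_combination h / 2)
  rw [mul_div_cancel_left₀ θ two_ne_zero, mul_div_cancel_left₀ θ₀ two_ne_zero,
    tan_eq_sin_div_cos, tan_eq_sin_div_cos, ← mul_div_assoc, ← mul_div_assoc,
    div_le_div_iff₀ hc hc₀]
  linarith

theorem Complex.norm_sub_le_norm_mul_norm_sub_conj {F : ℂ → ℂ}
    (hF : DifferentiableOn ℂ F (ball 0 1)) (him : ∀ w ∈ ball (0 : ℂ) 1, 0 < (F w).im)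
    {z : ℂ} (hz : z ∈ ball (0 : ℂ) 1) :
    ‖F z - F 0‖ ≤ ‖z‖ * ‖F z - conj (F 0)‖ := by
  have h0 : (0 : ℂ) ∈ ball (0 : ℂ) 1 := mem_ball_self one_pos
  have hden : ∀ w ∈ ball (0 : ℂ) 1, 0 < ‖F w - conj (F 0)‖ := fun w hw ↦ by
    refine norm_pos_iff.mpr fun heq ↦ ?_
    have := congr_arg im heq
    simp only [sub_im, conj_im, zero_im] at this
    linarith [him w hw, him 0 h0]
  have hmaps :
      MapsTo (fun w ↦ (F w - F 0) / (F w - conj (F 0))) (ball 0 1) (closedBall 0 1) := by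
    intro w hw
    rw [mem_closedBall_zero_iff, norm_div, div_le_one (hden w hw)]
    refine (sq_le_sq₀ (norm_nonneg _) (norm_nonneg _)).mp ?_
    rw [sq_norm_sub_conj]
    nlinarith [him w hw, him 0 h0]
  have hd : DifferentiableOn ℂ (fun w ↦ (F w - F 0) / (F w - conj (F 0))) (ball 0 1) :=
    (hF.sub_const _).div (hF.sub_const _) fun w hw ↦ norm_pos_iff.mp (hden w hw)
  have := norm_le_norm_of_mapsTo_ball hd hmaps (by simp) (mem_ball_zero_iff.mp hz)
  rwa [norm_div, div_le_iff₀ (hden z hz)] at this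

theorem one_sub_norm_mul_tan_le {F : ℂ → ℂ} (hF : DifferentiableOn ℂ F (ball 0 1))
    (hstrip : ∀ w ∈ ball (0 : ℂ) 1, |(F w).re| < 1) {z : ℂ} (hz : z ∈ ball (0 : ℂ) 1) :
    (1 - ‖z‖) * Real.tan (π * ((F z).re + 1) / 4) ≤
      (1 + ‖z‖) * Real.tan (π * ((F 0).re + 1) / 4) := by
  set w : ℂ → ℂ := fun ζ ↦ (π / 2 : ℝ) * (F ζ + 1) * I
  have hw_im : ∀ ζ, (w ζ).im / 2 = π * ((F ζ).re + 1) / 4 := fun ζ ↦ by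
    simp only [w, mul_im, mul_re, ofReal_re, ofReal_im, add_re, add_im, one_re, one_im, I_re, I_im]
    ring
  have hw_mem : ∀ ζ ∈ ball (0 : ℂ) 1, (w ζ).im ∈ Ioo 0 π := fun ζ hζ ↦ by
    obtain ⟨hlo, hhi⟩ := abs_lt.mp (hstrip ζ hζ)
    have := hw_im ζ
    constructor <;> nlinarith [pi_pos]
  have hpick := norm_sub_le_norm_mul_norm_sub_conj (F := fun ζ ↦ exp (w ζ))
    (((hF.add_const 1).const_mul _).mul_const I).cexp
    (fun ζ hζ ↦ by
      rw [exp_im]; exact mul_pos (Real.exp_pos _) (sin_pos_of_mem_Ioo (hw_mem ζ hζ))) hz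
  have hr : ‖z‖ ^ 2 ≤ 1 := by
    have := mem_ball_zero_iff.mp hz
    nlinarith [norm_nonneg z]
  have := one_sub_mul_tan_half_le (hw_mem z hz) (hw_mem 0 (mem_ball_self one_pos))
    (norm_nonneg z) (one_sub_sq_mul_one_sub_cos_le hr hpick)
  rwa [hw_im, hw_im] at this

theorem le_four_div_pi_mul_arctan_sub_one {x T : ℝ} (hx : x ∈ Ioo (-1) 1)
    (h : Real.tan (π * (x + 1) / 4) ≤ T) : x ≤ 4 / π * Real.arctan T - 1 := by
  have : π * (x + 1) / 4 ≤ Real.arctan T := by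
    rw [← Real.arctan_tan (x := π * (x + 1) / 4) (by nlinarith [pi_pos, hx.1])
      (by nlinarith [pi_pos, hx.2])]
    exact Real.arctan_strictMono.monotone h
  rw [div_mul_eq_mul_div, le_sub_iff_add_le, le_div_iff₀ pi_pos]
  linarith

theorem re_le_of_abs_re_lt_one {F : ℂ → ℂ} (hF : DifferentiableOn ℂ F (ball 0 1))
    (hstrip : ∀ w ∈ ball (0 : ℂ) 1, |(F w).re| < 1) {c : ℝ} (hc : c < 1) (hF0 : (F 0).re ≤ c)
    {z : ℂ} (hz : z ∈ ball (0 : ℂ) 1) :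
    (F z).re ≤ 4 / π * Real.arctan (Real.tan (π * (c + 1) / 4) * (1 + ‖z‖) / (1 - ‖z‖)) - 1 := by
  obtain ⟨hz_lo, hz_hi⟩ := abs_lt.mp (hstrip z hz)
  obtain ⟨h0_lo, -⟩ := abs_lt.mp (hstrip 0 (mem_ball_self one_pos))
  have hr : 0 < 1 - ‖z‖ := sub_pos.mpr (mem_ball_zero_iff.mp hz)
  have htan : Real.tan (π * ((F 0).re + 1) / 4) ≤ Real.tan (π * (c + 1) / 4) :=
    Real.strictMonoOn_tan.monotoneOn ⟨by nlinarith [pi_pos], by nlinarith [pi_pos]⟩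
      ⟨by nlinarith [pi_pos], by nlinarith [pi_pos]⟩ (by nlinarith [pi_pos])
  refine le_four_div_pi_mul_arctan_sub_one ⟨hz_lo, hz_hi⟩ ?_
  rw [le_div_iff₀ hr]
  calc Real.tan (π * ((F z).re + 1) / 4) * (1 - ‖z‖)
      _ ≤ (1 + ‖z‖) * Real.tan (π * ((F 0).re + 1) / 4) := by
        linarith [one_sub_norm_mul_tan_le hF hstrip hz]
      _ ≤ Real.tan (π * (c + 1) / 4) * (1 + ‖z‖) := by
        nlinarith [norm_nonneg z]

/-- Schwarz lemma for complex-valued harmonic self-maps of the disk: if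
`f = g + conj h` (with `g, h` holomorphic) maps `𝔻` into `𝔻` and `f 0 = a`, then
`|f z| ≤ (4/π)·arctan (s(|a|)·(1+|z|)/(1-|z|)) - 1` where `s t = tan (π(t+1)/4)`. -/
theorem harmonic_schwarz_complex (a : ℂ) (f g h : ℂ → ℂ)
    (hg : DifferentiableOn ℂ g (Metric.ball 0 1))
    (hh : DifferentiableOn ℂ h (Metric.ball 0 1))
    (hf : ∀ z ∈ Metric.ball (0 : ℂ) 1, f z = g z + (starRingEnd ℂ) (h z))
    (hmaps : Set.MapsTo f (Metric.ball 0 1) (Metric.ball 0 1))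
    (h0 : f 0 = a) :
    ∀ z ∈ Metric.ball (0 : ℂ) 1,
      ‖f z‖ ≤ (4 / Real.pi) *
          Real.arctan (Real.tan (Real.pi * (‖a‖ + 1) / 4) * (1 + ‖z‖) / (1 - ‖z‖)) - 1 := by
  intro z hz
  obtain ⟨u, hu, hufz⟩ := exists_norm_eq_mul_self (f z)
  set F : ℂ → ℂ := fun w ↦ u * g w + conj u * h w
  have hFre : ∀ w ∈ ball (0 : ℂ) 1, (F w).re = (u * f w).re := fun w hw ↦ by
    simp only [F, hf w hw, add_re, mul_re, conj_re, conj_im, mul_add]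
    ring
  have hre_le : ∀ w ∈ ball (0 : ℂ) 1, |(F w).re| ≤ ‖f w‖ := fun w hw ↦ by
    simpa [hFre w hw, hu] using abs_re_le_norm (u * f w)
  have hF0 : (F 0).re ≤ ‖a‖ := h0 ▸ (le_abs_self _).trans (hre_le 0 (mem_ball_self one_pos))
  have := re_le_of_abs_re_lt_one (F := F) ((hg.const_mul u).add (hh.const_mul (conj u)))
    (fun w hw ↦ (hre_le w hw).trans_lt (mem_ball_zero_iff.mp (hmaps hw)))
    (h0 ▸ mem_ball_zero_iff.mp (hmaps (mem_ball_self one_pos))) hF0 hz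
  rwa [hFre z hz, ← hufz, ofReal_re] at this
end

section
/- Let f : 𝔻 → 𝔻 be harmonic with s = s(f(0)) = tan(π(|f(0)|+1)/4). If f extends continuously to a point b on the unit circle with |f(b)| = 1 and f is real-differentiable at b, then Λ_f(b) ≥ 2/(sπ), where Λ_f(b) is the operator norm of the differential of f at b. -/
open Real Set Metric Complex
open Topology ComplexConjugate

/-!
Since `|f b| = 1`, `u = Re (conj (f b) * f)` is the real part of the holomorphic
function `F = conj (f b) * g + f b * h`, with `|u| < 1` on the disk and `u b = 1`. The map
`σ = exp (iπ(1 - F)/4)` sends the disk into the open first quadrant with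
`Im σ / Re σ = tan (π(1 - u)/4)`, and `σ²` lands in the upper half-plane, so the Schwarz lemma
composed with a Cayley map bounds `σ(z)²` inside a hyperbolic disk of radius `|z|` around
`σ(0)²`. In the quadrant this reads `tan (π(1 - u(z))/4) ≥ tan (π(1 - u(0))/4) (1-|z|)/(1+|z|)`.
Both sides vanish at `z = b`, so comparing their radial derivatives there gives
`Re (conj (f b) * df b) ≥ 2 tan (π(1 - u(0))/4) / π ≥ 2/(sπ)`, using `u(0) ≤ |f 0|` and
`tan (π(1 - a)/4) = 1 / tan (π(1 + a)/4)`.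
-/

lemma one_sub_mul_le_one_add_mul_of_sq_add_sq_le {a b r : ℝ} (ha : 0 ≤ a) (hb : 0 ≤ b)
    (hr : 0 ≤ r) (h : (1 - r ^ 2) * (a ^ 2 + b ^ 2) ≤ 2 * (1 + r ^ 2) * (a * b)) :
    (1 - r) * b ≤ (1 + r) * a := by
  -- `h` says `((1 - r) a - (1 + r) b) ((1 + r) a - (1 - r) b) ≤ 0`
  by_contra! hlt
  nlinarith [mul_nonneg hr ha, mul_nonneg hr hb]

lemma le_of_hasDerivWithinAt_Iio_of_le {f g : ℝ → ℝ} {f' g' a : ℝ}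
    (hf : HasDerivWithinAt f f' (Iio a) a) (hg : HasDerivWithinAt g g' (Iio a) a)
    (hle : ∀ᶠ x in 𝓝[<] a, f x ≤ g x) (heq : f a = g a) : g' ≤ f' := by
  rw [hasDerivWithinAt_iff_tendsto_slope, sdiff_singleton_eq_self self_notMem_Iio] at hf hg
  refine le_of_tendsto_of_tendsto hg hf ?_
  filter_upwards [hle, self_mem_nhdsWithin] with x hx hxa
  rw [slope_def_field, slope_def_field, heq]
  exact div_le_div_of_nonpos_of_le (sub_nonpos.2 (le_of_lt hxa)) (by linarith)

lemma two_mul_div_pi_le_of_le_tan {u : ℝ → ℝ} {u' τ : ℝ} (hu : HasDerivWithinAt u u' (Iio 1) 1)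
    (hu₁ : u 1 = 1)
    (hle : ∀ r ∈ Ioo (0 : ℝ) 1, τ * ((1 - r) / (1 + r)) ≤ Real.tan (π * (1 - u r) / 4)) :
    2 * τ / π ≤ u' := by
  have hlower : HasDerivWithinAt (fun r => τ * ((1 - r) / (1 + r))) (-(τ / 2)) (Iio 1) 1 := by
    have := (((hasDerivAt_id (1 : ℝ)).const_sub 1).div ((hasDerivAt_id (1 : ℝ)).const_add 1)
      (by norm_num)).const_mul τ
    exact (this.congr_deriv (by simp only [id]; ring)).hasDerivWithinAt
  have hupper : HasDerivWithinAt (fun r => Real.tan (π * (1 - u r) / 4)) (-(π / 4 * u'))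
      (Iio 1) 1 := by
    have := (Real.hasDerivAt_tan (x := π * (1 - u 1) / 4) (by simp [hu₁])).comp_hasDerivWithinAt 1
      (((hu.const_sub 1).const_mul π).div_const 4)
    exact this.congr_deriv (by rw [hu₁, sub_self, mul_zero, zero_div, Real.cos_zero]; ring)
  have hcmp := le_of_hasDerivWithinAt_Iio_of_le hlower hupper
    (by filter_upwards [Ioo_mem_nhdsLT zero_lt_one] using hle) (by simp [hu₁])
  rw [div_le_iff₀ pi_pos]
  linarith

lemma inv_tan_le_tan_of_abs_le {x a : ℝ} (hxa : |x| ≤ a) (ha : a < 1) :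
    (Real.tan (π * (a + 1) / 4))⁻¹ ≤ Real.tan (π * (1 - x) / 4) := by
  obtain ⟨hx₁, hx₂⟩ := abs_le.1 hxa
  rw [← Real.tan_pi_div_two_sub]
  exact strictMonoOn_tan.monotoneOn ⟨by nlinarith [pi_pos], by nlinarith [pi_pos]⟩
    ⟨by nlinarith [pi_pos], by nlinarith [pi_pos]⟩ (by nlinarith [pi_pos])

namespace Complex

lemma im_div_re_mul_le_of_norm_sq_sub_le {σ σ₀ : ℂ} {r : ℝ} (hre : 0 < σ.re) (him : 0 ≤ σ.im)
    (hre₀ : 0 < σ₀.re) (him₀ : 0 ≤ σ₀.im) (hr₀ : 0 ≤ r) (hr₁ : r < 1)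
    (h : ‖σ ^ 2 - σ₀ ^ 2‖ ≤ r * ‖σ ^ 2 - conj (σ₀ ^ 2)‖) :
    σ₀.im / σ₀.re * ((1 - r) / (1 + r)) ≤ σ.im / σ.re := by
  have hsq := pow_le_pow_left₀ (norm_nonneg _) h 2
  rw [mul_pow, Complex.sq_norm, Complex.sq_norm, normSq_apply, normSq_apply] at hsq
  simp only [sub_re, sub_im, conj_re, conj_im, pow_two, mul_re, mul_im] at hsq
  -- expanded, `hsq` is `(1 - r²) (Y² + 4 (a² + b²)) ≤ 8 (1 + r²) a b` with `a = Im σ Re σ₀`,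
  -- `b = Re σ Im σ₀` and `Y = |σ|² - |σ₀|²`
  have hquad : (1 - r ^ 2) * ((σ.im * σ₀.re) ^ 2 + (σ.re * σ₀.im) ^ 2) ≤
      2 * (1 + r ^ 2) * ((σ.im * σ₀.re) * (σ.re * σ₀.im)) := by
    nlinarith [mul_nonneg (sub_nonneg.2 (pow_le_one₀ hr₀ hr₁.le (n := 2)))
      (sq_nonneg (σ.re ^ 2 + σ.im ^ 2 - σ₀.re ^ 2 - σ₀.im ^ 2))]
  have := one_sub_mul_le_one_add_mul_of_sq_add_sq_le (mul_nonneg him hre₀.le)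
    (mul_nonneg hre.le him₀) hr₀ hquad
  rw [div_mul_div_comm, div_le_div_iff₀ (by positivity) hre]
  nlinarith

lemma norm_sub_lt_norm_sub_conj {w w₀ : ℂ} (hw : 0 < w.im) (hw₀ : 0 < w₀.im) :
    ‖w - w₀‖ < ‖w - conj w₀‖ := by
  rw [← sq_lt_sq₀ (norm_nonneg _) (norm_nonneg _), Complex.sq_norm, Complex.sq_norm,
    normSq_apply, normSq_apply]
  simp only [sub_re, sub_im, conj_re, conj_im]
  nlinarith [mul_pos hw hw₀]

lemma norm_sub_le_norm_mul_norm_sub_conj_of_im_pos {Ω : ℂ → ℂ}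
    (hd : DifferentiableOn ℂ Ω (ball 0 1)) (him : ∀ z ∈ ball (0 : ℂ) 1, 0 < (Ω z).im) {z : ℂ}
    (hz : z ∈ ball (0 : ℂ) 1) :
    ‖Ω z - Ω 0‖ ≤ ‖z‖ * ‖Ω z - conj (Ω 0)‖ := by
  have hlt : ∀ z ∈ ball (0 : ℂ) 1, ‖Ω z - Ω 0‖ < ‖Ω z - conj (Ω 0)‖ := fun z hz =>
    norm_sub_lt_norm_sub_conj (him z hz) (him 0 (mem_ball_self one_pos))
  have hne : ∀ z ∈ ball (0 : ℂ) 1, Ω z - conj (Ω 0) ≠ 0 := fun z hz =>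
    norm_pos_iff.1 ((norm_nonneg _).trans_lt (hlt z hz))
  have hcayley : ‖(Ω z - Ω 0) / (Ω z - conj (Ω 0))‖ ≤ ‖z‖ := by
    refine norm_le_norm_of_mapsTo_ball (f := fun w => (Ω w - Ω 0) / (Ω w - conj (Ω 0)))
      ((hd.sub_const _).div (hd.sub_const _) hne) (fun w hw => ?_) (by simp)
      (mem_ball_zero_iff.1 hz)
    rw [mem_closedBall_zero_iff, norm_div]
    exact div_le_one_of_le₀ (hlt w hw).le (norm_nonneg _)
  rwa [norm_div, div_le_iff₀ (norm_pos_iff.2 (hne z hz))] at hcayley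

lemma exp_im_div_exp_re (z : ℂ) : (exp z).im / (exp z).re = Real.tan z.im := by
  rw [exp_re, exp_im, mul_div_mul_left _ _ (Real.exp_pos _).ne', Real.tan_eq_sin_div_cos]

theorem tan_mul_le_tan_of_abs_re_lt_one {F : ℂ → ℂ} (hF : DifferentiableOn ℂ F (ball 0 1))
    (hstrip : ∀ z ∈ ball (0 : ℂ) 1, |(F z).re| < 1) {z : ℂ} (hz : z ∈ ball (0 : ℂ) 1) :
    Real.tan (π * (1 - (F 0).re) / 4) * ((1 - ‖z‖) / (1 + ‖z‖)) ≤
      Real.tan (π * (1 - (F z).re) / 4) := by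
  set σ : ℂ → ℂ := fun z => exp (π / 4 * I * (1 - F z))
  have hσ_im : ∀ z, (π / 4 * I * (1 - F z)).im = π * (1 - (F z).re) / 4 := fun z => by
    simp only [mul_im, mul_re, div_ofNat_re, div_ofNat_im, ofReal_re, ofReal_im, I_re, I_im,
      sub_re, sub_im, one_re, one_im]
    ring
  have hangle : ∀ z ∈ ball (0 : ℂ) 1, π * (1 - (F z).re) / 4 ∈ Ioo 0 (π / 2) := fun z hz => by
    obtain ⟨hl, hr⟩ := abs_lt.1 (hstrip z hz)
    constructor <;> nlinarith [pi_pos]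
  have hre : ∀ z ∈ ball (0 : ℂ) 1, 0 < (σ z).re := fun z hz => by
    rw [exp_re, hσ_im]
    exact mul_pos (Real.exp_pos _)
      (cos_pos_of_mem_Ioo ⟨by linarith [(hangle z hz).1, pi_pos], (hangle z hz).2⟩)
  have him : ∀ z ∈ ball (0 : ℂ) 1, 0 < (σ z).im := fun z hz => by
    rw [exp_im, hσ_im]
    exact mul_pos (Real.exp_pos _)
      (sin_pos_of_pos_of_lt_pi (hangle z hz).1 (by linarith [(hangle z hz).2, pi_pos]))
  have htan : ∀ z, (σ z).im / (σ z).re = Real.tan (π * (1 - (F z).re) / 4) := fun z => by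
    rw [exp_im_div_exp_re, hσ_im]
  have hd : DifferentiableOn ℂ (fun z => σ z ^ 2) (ball 0 1) :=
    (((differentiableOn_const _).sub hF).const_mul _).cexp.pow 2
  have hsq_im : ∀ z ∈ ball (0 : ℂ) 1, 0 < (σ z ^ 2).im := fun z hz => by
    rw [pow_two, mul_im]
    nlinarith [mul_pos (hre z hz) (him z hz)]
  have h0 : (0 : ℂ) ∈ ball (0 : ℂ) 1 := mem_ball_self one_pos
  rw [← htan, ← htan]
  exact im_div_re_mul_le_of_norm_sq_sub_le (hre z hz) (him z hz).le (hre 0 h0) (him 0 h0).le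
    (norm_nonneg z) (mem_ball_zero_iff.1 hz)
    (norm_sub_le_norm_mul_norm_sub_conj_of_im_pos hd hsq_im hz)

lemma abs_re_conj_mul_le {c : ℂ} (hc : ‖c‖ = 1) (w : ℂ) : |(conj c * w).re| ≤ ‖w‖ :=
  (abs_re_le_norm _).trans_eq (by rw [norm_mul, norm_conj, hc, one_mul])

theorem tan_mul_le_tan_re_conj_mul_of_mapsTo_ball {f g h : ℂ → ℂ} {c z : ℂ}
    (hg : DifferentiableOn ℂ g (ball 0 1)) (hh : DifferentiableOn ℂ h (ball 0 1))
    (hf : ∀ z ∈ ball (0 : ℂ) 1, f z = g z + conj (h z)) (hmaps : MapsTo f (ball 0 1) (ball 0 1))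
    (hc : ‖c‖ = 1) (hz : z ∈ ball (0 : ℂ) 1) :
    Real.tan (π * (1 - (conj c * f 0).re) / 4) * ((1 - ‖z‖) / (1 + ‖z‖)) ≤
      Real.tan (π * (1 - (conj c * f z).re) / 4) := by
  have hre : ∀ z ∈ ball (0 : ℂ) 1, (conj c * g z + c * h z).re = (conj c * f z).re :=
    fun z hz => by rw [hf z hz, mul_add, ← map_mul, add_re, add_re, conj_re]
  have hstrip : ∀ z ∈ ball (0 : ℂ) 1, |(conj c * g z + c * h z).re| < 1 := fun z hz => by
    rw [hre z hz]
    exact (abs_re_conj_mul_le hc _).trans_lt (mem_ball_zero_iff.1 (hmaps hz))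
  simpa only [hre z hz, hre 0 (mem_ball_self one_pos)] using
    tan_mul_le_tan_of_abs_re_lt_one (F := fun z => conj c * g z + c * h z)
      ((hg.const_mul _).add (hh.const_mul _)) hstrip hz

end Complex

lemma HasFDerivWithinAt.hasDerivWithinAt_ofReal_mul_Iio {E : Type*} [NormedAddCommGroup E]
    [NormedSpace ℝ E] {f : ℂ → E} {df : ℂ →L[ℝ] E} {b : ℂ} (hb : ‖b‖ ≤ 1)
    (hdf : HasFDerivWithinAt f df (closedBall 0 1) b) :
    HasDerivWithinAt (fun r : ℝ => f (r * b)) (df b) (Iio 1) 1 := by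
  have hray : HasDerivAt (fun r : ℝ => (r : ℂ) * b) b 1 := by
    simpa using (hasDerivAt_id (1 : ℝ)).ofReal_comp.mul_const b
  have hmaps : MapsTo (fun r : ℝ => (r : ℂ) * b) (Ioo 0 1) (closedBall 0 1) := fun r hr => by
    rw [mem_closedBall_zero_iff, norm_mul, norm_real, Real.norm_of_nonneg hr.1.le]
    nlinarith [hr.2, norm_nonneg b]
  exact (hdf.comp_hasDerivWithinAt_of_eq 1 hray.hasDerivWithinAt hmaps (by simp))
    |>.mono_of_mem_nhdsWithin (Ioo_mem_nhdsLT zero_lt_one)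

theorem boundary_schwarz_harmonic_general (f g h : ℂ → ℂ) (b : ℂ)
    (hb : b ∈ Metric.sphere (0 : ℂ) 1)
    (hg : DifferentiableOn ℂ g (Metric.ball 0 1))
    (hh : DifferentiableOn ℂ h (Metric.ball 0 1))
    (hf : ∀ z ∈ Metric.ball (0 : ℂ) 1, f z = g z + (starRingEnd ℂ) (h z))
    (hmaps : Set.MapsTo f (Metric.ball 0 1) (Metric.ball 0 1))
    (hfb : ‖f b‖ = 1)
    (df : ℂ →L[ℝ] ℂ)
    (hdf : HasFDerivWithinAt f df (Metric.closedBall 0 1) b) :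
    ‖df‖ ≥ 2 / (Real.tan (Real.pi * (‖f 0‖ + 1) / 4) * Real.pi) := by
  have hb₁ : ‖b‖ = 1 := mem_sphere_zero_iff_norm.1 hb
  set u : ℝ → ℝ := fun r => (conj (f b) * f (r * b)).re
  have hu : HasDerivWithinAt u (conj (f b) * df b).re (Iio 1) 1 :=
    reCLM.hasFDerivAt.comp_hasDerivWithinAt 1
      ((hdf.hasDerivWithinAt_ofReal_mul_Iio hb₁.le).const_mul _)
  have hu₁ : u 1 = 1 := by
    simp only [u, ofReal_one, one_mul, conj_mul', hfb]
    norm_num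
  have hbound : ∀ r ∈ Ioo (0 : ℝ) 1, Real.tan (π * (1 - (conj (f b) * f 0).re) / 4) *
      ((1 - r) / (1 + r)) ≤ Real.tan (π * (1 - u r) / 4) := fun r hr => by
    have hnorm : ‖(r : ℂ) * b‖ = r := by
      rw [norm_mul, hb₁, mul_one, norm_real, Real.norm_of_nonneg hr.1.le]
    have hz : (r : ℂ) * b ∈ ball (0 : ℂ) 1 := by rw [mem_ball_zero_iff, hnorm]; exact hr.2
    simpa only [hnorm] using tan_mul_le_tan_re_conj_mul_of_mapsTo_ball hg hh hf hmaps hfb hz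
  calc 2 / (Real.tan (π * (‖f 0‖ + 1) / 4) * π)
      = 2 * (Real.tan (π * (‖f 0‖ + 1) / 4))⁻¹ / π := by ring
    _ ≤ 2 * Real.tan (π * (1 - (conj (f b) * f 0).re) / 4) / π := by
      gcongr
      exact inv_tan_le_tan_of_abs_le (abs_re_conj_mul_le hfb _)
        (mem_ball_zero_iff.1 (hmaps (mem_ball_self one_pos)))
    _ ≤ (conj (f b) * df b).re := two_mul_div_pi_le_of_le_tan hu hu₁ hbound
    _ ≤ ‖conj (f b) * df b‖ := re_le_norm _
    _ = ‖df b‖ := by rw [norm_mul, norm_conj, hfb, one_mul]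
    _ ≤ ‖df‖ := by simpa [hb₁] using df.le_opNorm b

/-- Boundary Schwarz lemma for harmonic self-maps of the disk: if `f = g + conj h`
maps `𝔻` into `𝔻`, extends continuously to a boundary point `b` with `|f b| = 1`, and
is real-differentiable at `b` (within the closed disk, with differential `df`), then
`Λ_f(b) = ‖df‖ ≥ 2/(sπ)` where `s = tan (π(|f 0|+1)/4)`. -/
theorem boundary_schwarz_harmonic (f g h : ℂ → ℂ) (b : ℂ)
    (hb : b ∈ Metric.sphere (0 : ℂ) 1)
    (hg : DifferentiableOn ℂ g (Metric.ball 0 1))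
    (hh : DifferentiableOn ℂ h (Metric.ball 0 1))
    (hf : ∀ z ∈ Metric.ball (0 : ℂ) 1, f z = g z + (starRingEnd ℂ) (h z))
    (hmaps : Set.MapsTo f (Metric.ball 0 1) (Metric.ball 0 1))
    (hcont : ContinuousWithinAt f (Metric.closedBall 0 1) b)
    (hfb : ‖f b‖ = 1)
    (df : ℂ →L[ℝ] ℂ)
    (hdf : HasFDerivWithinAt f df (Metric.closedBall 0 1) b) :
    ‖df‖ ≥ 2 / (Real.tan (Real.pi * (‖f 0‖ + 1) / 4) * Real.pi) :=
  boundary_schwarz_harmonic_general f g h b hb hg hh hf hmaps hfb df hdf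
end

section
/- Let f : 𝔻 → ℂ with a boundary point b ∈ 𝕋 such that f extends continuously to b with |f(b)| = 1, and f is real-differentiable at b. Suppose A : [0,1] → [0,1] is differentiable at 1 with A(1) = 1 and M_f(r) := max{|f(z)| : |z| = r} ≤ A(r) for all r ∈ [0,1). Then the radial derivative satisfies |f'_r(b)| ≥ A'(1), and hence Λ_f(b) ≥ A'(1). -/
open Set Metric Filter Topology

/-! Along the radius `t ↦ f (t • b)` the bound `‖f (t • b)‖ ≤ A t` together with
`‖f b‖ = A 1 = 1` gives `A 1 - A t ≤ ‖f b - f (t • b)‖` for `t < 1`. Dividing by `1 - t`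
and letting `t → 1⁻`, the left side tends to `A'(1)` and the right side to the norm of the
radial derivative `‖df b‖ ≤ ‖df‖`. -/

theorem HasDerivWithinAt.le_norm_of_sub_le_norm_sub {E : Type*} [NormedAddCommGroup E]
    [NormedSpace ℝ E] {A : ℝ → ℝ} {g : ℝ → E} {a : ℝ} {g' : E} {x : ℝ}
    (hA : HasDerivWithinAt A a (Iio x) x) (hg : HasDerivWithinAt g g' (Iio x) x)
    (hle : ∀ᶠ t in 𝓝[<] x, A x - A t ≤ ‖g x - g t‖) : a ≤ ‖g'‖ := by
  have hA_slope := (hasDerivWithinAt_iff_tendsto_slope' self_notMem_Iio).mp hA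
  have hg_slope := ((hasDerivWithinAt_iff_tendsto_slope' self_notMem_Iio).mp hg).norm
  refine le_of_tendsto_of_tendsto hA_slope hg_slope ?_
  filter_upwards [hle, self_mem_nhdsWithin] with t ht (htx : t < x)
  have hpos : 0 < x - t := sub_pos.mpr htx
  calc slope A x t = (A x - A t) / (x - t) := by
        rw [slope_def_field, ← neg_sub (A x), ← neg_sub x, neg_div_neg_eq]
    _ ≤ ‖g x - g t‖ / (x - t) := by gcongr
    _ = ‖slope g x t‖ := by
        rw [slope, vsub_eq_sub, norm_smul, norm_inv, norm_sub_rev (g t), Real.norm_eq_abs,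
          abs_sub_comm, abs_of_pos hpos, div_eq_inv_mul]

theorem HasFDerivWithinAt.hasDerivWithinAt_radial {E F : Type*} [NormedAddCommGroup E]
    [NormedSpace ℝ E] [NormedAddCommGroup F] [NormedSpace ℝ F] {f : E → F} {df : E →L[ℝ] F}
    {b : E} (hf : HasFDerivWithinAt f df (closedBall 0 ‖b‖) b) :
    HasDerivWithinAt (fun t : ℝ => f (t • b)) (df b) (Icc 0 1) 1 := by
  have hmaps : MapsTo (fun t : ℝ => t • b) (Icc 0 1) (closedBall 0 ‖b‖) := by
    intro t ht
    rw [mem_closedBall_zero_iff, norm_smul, Real.norm_of_nonneg ht.1]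
    exact mul_le_of_le_one_left (norm_nonneg b) ht.2
  have hray : HasDerivWithinAt (fun t : ℝ => t • b) b (Icc 0 1) 1 := by
    simpa using ((hasDerivAt_id (1 : ℝ)).smul_const b).hasDerivWithinAt
  have hf1 : HasFDerivWithinAt f df (closedBall 0 ‖b‖) ((1 : ℝ) • b) := by rwa [one_smul]
  exact hf1.comp_hasDerivWithinAt 1 hray hmaps

theorem boundary_lower_bound_radial_general (f : ℂ → ℂ) (b : ℂ)
    (hb : b ∈ Metric.sphere (0 : ℂ) 1)
    (hfb : ‖f b‖ = 1)
    (df : ℂ →L[ℝ] ℂ)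
    (hdf : HasFDerivWithinAt f df (Metric.closedBall 0 1) b)
    (A : ℝ → ℝ) (A' : ℝ)
    (hA1 : A 1 = 1)
    (hA' : HasDerivWithinAt A A' (Set.Icc 0 1) 1)
    (hM : ∀ z ∈ Metric.ball (0 : ℂ) 1, ‖f z‖ ≤ A ‖z‖) :
    ‖df b‖ ≥ A' ∧ ‖df‖ ≥ A' := by
  have hb1 : ‖b‖ = 1 := mem_sphere_zero_iff_norm.mp hb
  have hIcc : Icc (0 : ℝ) 1 ∈ 𝓝[<] 1 := Icc_mem_nhdsLT zero_lt_one
  have hradial := (hb1 ▸ hdf).hasDerivWithinAt_radial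
  have hincr : ∀ᶠ t in 𝓝[<] (1 : ℝ), A 1 - A t ≤ ‖f ((1 : ℝ) • b) - f (t • b)‖ := by
    filter_upwards [Ioo_mem_nhdsLT zero_lt_one] with t ht
    have hnorm : ‖t • b‖ = t := by rw [norm_smul, hb1, mul_one, Real.norm_of_nonneg ht.1.le]
    have hbound := hM (t • b) (by rw [mem_ball_zero_iff, hnorm]; exact ht.2)
    rw [hnorm] at hbound
    rw [one_smul]
    calc A 1 - A t ≤ ‖f b‖ - ‖f (t • b)‖ := by rw [hA1, hfb]; linarith
      _ ≤ ‖f b - f (t • b)‖ := norm_sub_norm_le _ _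
  have hradial_le : A' ≤ ‖df b‖ :=
    (hA'.mono_of_mem_nhdsWithin hIcc).le_norm_of_sub_le_norm_sub
      (hradial.mono_of_mem_nhdsWithin hIcc) hincr
  exact ⟨hradial_le, hradial_le.trans (df.unit_le_opNorm b hb1.le)⟩

/-- If `f : 𝔻 → ℂ` extends continuously to a boundary point `b` with `|f b| = 1`, is
real-differentiable at `b` (differential `df` within the closed disk), and its maximum
modulus satisfies `M_f(r) ≤ A r` for a function `A : [0,1] → [0,1]` with `A 1 = 1`
differentiable at `1`, then the radial derivative satisfies `|f'_r(b)| = ‖df b‖ ≥ A'(1)`,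
and hence `Λ_f(b) = ‖df‖ ≥ A'(1)`. -/
theorem boundary_lower_bound_radial (f : ℂ → ℂ) (b : ℂ)
    (hb : b ∈ Metric.sphere (0 : ℂ) 1)
    (hcont : ContinuousWithinAt f (Metric.closedBall 0 1) b)
    (hfb : ‖f b‖ = 1)
    (df : ℂ →L[ℝ] ℂ)
    (hdf : HasFDerivWithinAt f df (Metric.closedBall 0 1) b)
    (A : ℝ → ℝ) (A' : ℝ)
    (hA1 : A 1 = 1)
    (hAmaps : Set.MapsTo A (Set.Icc 0 1) (Set.Icc 0 1))
    (hA' : HasDerivWithinAt A A' (Set.Icc 0 1) 1)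
    (hM : ∀ z ∈ Metric.ball (0 : ℂ) 1, ‖f z‖ ≤ A ‖z‖) :
    ‖df b‖ ≥ A' ∧ ‖df‖ ≥ A' :=
  boundary_lower_bound_radial_general f b hb hfb df hdf A A' hA1 hA' hM
end

section
/- If u is a real-valued harmonic function on the unit disk with values in (-1,1), then |∇u(0)| ≤ 4/π. -/
/-!
Write `u = Re F` with `F` holomorphic. For `0 < r < 1` the Cauchy formula for `F'(0)`, combined
with `∮ F dz = 0` to trade `F` for `2 Re F`, gives
`π r F'(0) = ∫₀^{2π} Re F(r e^{iθ}) e^{-iθ} dθ`.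
Rotating so that the right-hand side is real and using `|Re F| ≤ 1`, its modulus is at most
`∫₀^{2π} |cos θ| dθ = 4`; letting `r → 1` gives `|∇u(0)| = |F'(0)| ≤ 4/π`.
-/

open Real Set Metric Complex ComplexConjugate intervalIntegral Filter Topology
open MeasureTheory (volume)

theorem integral_abs_cos_add (a : ℝ) : ∫ θ in 0..2 * π, |Real.cos (θ + a)| = 4 := by
  have hper : Function.Periodic (fun x => |Real.cos x|) (2 * π) := fun x => by
    simp [Real.cos_add_two_pi]
  have hintegrable (s t : ℝ) : IntervalIntegrable (fun x => |Real.cos x|) volume s t :=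
    Real.continuous_cos.abs.intervalIntegrable _ _
  have hpos : ∫ x in -(π / 2)..π / 2, |Real.cos x| = 2 := by
    have h : EqOn (fun x => |Real.cos x|) Real.cos (uIcc (-(π / 2)) (π / 2)) := fun x hx => by
      rw [uIcc_of_le (by linarith [pi_pos])] at hx
      exact abs_of_nonneg (Real.cos_nonneg_of_mem_Icc hx)
    rw [integral_congr h]
    norm_num
  have hneg : ∫ x in π / 2..3 * π / 2, |Real.cos x| = 2 := by
    have h : EqOn (fun x => |Real.cos x|) (fun x => -Real.cos x) (uIcc (π / 2) (3 * π / 2)) :=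
      fun x hx => by
        rw [uIcc_of_le (by linarith [pi_pos])] at hx
        exact abs_of_nonpos (Real.cos_nonpos_of_pi_div_two_le_of_le hx.1 (by linarith [hx.2]))
    rw [integral_congr h, integral_neg, integral_cos, show 3 * π / 2 = π / 2 + π by ring,
      Real.sin_add_pi]
    norm_num
  rw [integral_comp_add_right (fun x => |Real.cos x|), zero_add, add_comm (2 * π),
    hper.intervalIntegral_add_eq a (-(π / 2)),
    ← integral_add_adjacent_intervals (hintegrable _ (π / 2)) (hintegrable _ _),
    show -(π / 2) + 2 * π = 3 * π / 2 by ring, hpos, hneg]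
  norm_num

theorem norm_integral_smul_exp_neg_le {g : ℝ → ℝ} {M : ℝ}
    (hg : IntervalIntegrable g volume 0 (2 * π)) (hM : ∀ θ, |g θ| ≤ M) :
    ‖∫ θ in 0..2 * π, g θ • exp (-(θ * I))‖ ≤ 4 * M := by
  set B := ∫ θ in 0..2 * π, g θ • exp (-(θ * I))
  set a := arg B
  have hrot : exp (-(a * I)) * B = ∫ θ in 0..2 * π, g θ • exp (-((θ + a : ℝ) * I)) := by
    rw [← integral_const_mul]
    refine integral_congr fun θ _ => ?_
    rw [real_smul, real_smul, mul_left_comm, ← Complex.exp_add]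
    push_cast
    ring_nf
  have hre : (fun θ => (g θ • exp (-((θ + a : ℝ) * I))).re) =
      fun θ => g θ * Real.cos (θ + a) := by
    ext θ
    rw [smul_re, ← neg_mul, ← ofReal_neg, exp_ofReal_mul_I_re, Real.cos_neg, smul_eq_mul]
  calc ‖B‖ = (exp (-(a * I)) * B).re := by
        conv_rhs => rw [← norm_mul_exp_arg_mul_I B]
        rw [mul_left_comm, ← Complex.exp_add, neg_add_cancel, Complex.exp_zero, mul_one,
          ofReal_re]
    _ = ∫ θ in 0..2 * π, g θ * Real.cos (θ + a) := by
        rw [hrot, ← hre]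
        exact (reCLM.intervalIntegral_comp_comm (hg.smul_continuousOn (by fun_prop))).symm
    _ ≤ ∫ θ in 0..2 * π, M * |Real.cos (θ + a)| := by
        refine integral_mono_on (by positivity) (hg.mul_continuousOn (by fun_prop))
          (Continuous.intervalIntegrable (by fun_prop) _ _) fun θ _ => ?_
        calc g θ * Real.cos (θ + a) ≤ |g θ| * |Real.cos (θ + a)| := by
              rw [← abs_mul]; exact le_abs_self _
          _ ≤ M * |Real.cos (θ + a)| := by gcongr; exact hM θ
    _ = 4 * M := by rw [integral_const_mul, integral_abs_cos_add, mul_comm]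

section

variable {F : ℂ → ℂ} {c : ℂ} {r M : ℝ}

theorem norm_circleAverage_smul_conj_sub_center_le {g : ℂ → ℝ}
    (hg : CircleIntegrable g c r) (hr : 0 ≤ r) (hM : ∀ z ∈ sphere c r, |g z| ≤ M) :
    ‖circleAverage (fun z => g z • conj (z - c)) c r‖ ≤ 2 * r * M / π := by
  have hconj (θ : ℝ) : conj (circleMap c r θ - c) = r * exp (-(θ * I)) := by
    rw [circleMap_sub_center, circleMap_zero, map_mul, conj_ofReal, ← exp_conj, map_mul,
      conj_ofReal, conj_I, mul_neg]
  have hrot : ∫ θ in 0..2 * π, g (circleMap c r θ) • conj (circleMap c r θ - c)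
      = r * ∫ θ in 0..2 * π, g (circleMap c r θ) • exp (-(θ * I)) := by
    rw [← integral_const_mul]
    refine integral_congr fun θ _ => ?_
    rw [hconj, real_smul, real_smul]
    ring
  have hbound := norm_integral_smul_exp_neg_le hg fun θ => hM _ (circleMap_mem_sphere c hr θ)
  rw [circleAverage_def, hrot, norm_smul, norm_mul, norm_real, Real.norm_eq_abs, Real.norm_eq_abs,
    abs_of_nonneg hr, abs_of_pos (inv_pos.2 two_pi_pos)]
  calc (2 * π)⁻¹ * (r * ‖∫ θ in 0..2 * π, g (circleMap c r θ) • exp (-(θ * I))‖)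
      ≤ (2 * π)⁻¹ * (r * (4 * M)) := by gcongr
    _ = 2 * r * M / π := by field_simp; ring

theorem circleAverage_sub_center_mul_eq_zero (hF : DiffContOnCl ℂ F (ball c r)) (hr : 0 ≤ r) :
    circleAverage (fun z => (z - c) * F z) c r = 0 := by
  have hG : DiffContOnCl ℂ (fun z => (z - c) * F z) (ball c |r|) := by
    rw [abs_of_nonneg hr]
    exact (differentiable_id.sub_const c).diffContOnCl.smul hF
  simpa using hG.circleAverage

theorem circleAverage_div_sub_center (hF : DiffContOnCl ℂ F (ball c r)) (hr : 0 < r) :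
    circleAverage (fun z => F z / (z - c)) c r = deriv F c := by
  rw [circleAverage_eq_circleIntegral hr.ne', ← inv_smul_smul₀ two_pi_I_ne_zero (deriv F c),
    ← hF.deriv_eq_smul_circleIntegral hr]
  congr 2
  funext z
  rw [smul_eq_mul, smul_eq_mul, div_eq_mul_inv, one_div, ← inv_pow]
  ring

/-- On the circle `conj (z - c) = r ^ 2 / (z - c)`, so the average splits into the Cauchy integral
for `F'(c)` and the conjugate of the vanishing average of `(z - c) F z`. -/
theorem circleAverage_re_smul_conj_sub_center (hF : DiffContOnCl ℂ F (ball c r)) (hr : 0 < r) :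
    circleAverage (fun z => (F z).re • conj (z - c)) c r = (r ^ 2 / 2 : ℂ) * deriv F c := by
  have hsplit : EqOn (fun z => (F z).re • conj (z - c))
      (fun z => (r ^ 2 / 2 : ℂ) • (F z / (z - c)) + (1 / 2 : ℂ) • conj ((z - c) * F z))
      (sphere c |r|) := fun z hz => by
    have hnorm : ‖z - c‖ = r := by rw [← dist_eq_norm, mem_sphere.1 hz, abs_of_pos hr]
    have hne : z - c ≠ 0 := norm_ne_zero_iff.1 (hnorm ▸ hr.ne')
    have hmul_conj : (z - c) * conj (z - c) = r ^ 2 := by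
      rw [mul_conj, normSq_eq_norm_sq, hnorm]
      push_cast
      ring
    simp only [real_smul, smul_eq_mul, re_eq_add_conj, map_mul]
    field_simp
    linear_combination F z * hmul_conj
  have hcont : ContinuousOn F (sphere c r) := hF.continuousOn_ball.mono sphere_subset_closedBall
  have hdiv : ContinuousOn (fun z => F z / (z - c)) (sphere c r) :=
    hcont.div (by fun_prop) fun z hz => sub_ne_zero.2 (ne_of_mem_sphere hz hr.ne')
  have hmul : ContinuousOn (fun z => (z - c) * F z) (sphere c r) :=
    (continuous_sub_right c).continuousOn.mul hcont
  have hmul_conj : ContinuousOn (fun z => conj ((z - c) * F z)) (sphere c r) :=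
    continuous_conj.comp_continuousOn hmul
  have havg_conj : circleAverage (fun z => conj ((z - c) * F z)) c r = 0 := by
    have := conjCLE.toContinuousLinearMap.circleAverage_comp_comm (hmul.circleIntegrable hr.le)
    rwa [circleAverage_sub_center_mul_eq_zero hF hr.le, map_zero] at this
  rw [circleAverage_congr_sphere hsplit,
    circleAverage_fun_add (f₁ := fun z => (r ^ 2 / 2 : ℂ) • (F z / (z - c)))
      (f₂ := fun z => (1 / 2 : ℂ) • conj ((z - c) * F z))
      ((hdiv.const_smul (r ^ 2 / 2 : ℂ)).circleIntegrable hr.le)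
      ((hmul_conj.const_smul (1 / 2 : ℂ)).circleIntegrable hr.le),
    circleAverage_fun_smul, circleAverage_fun_smul, circleAverage_div_sub_center hF hr, havg_conj,
    smul_zero, add_zero, smul_eq_mul]

theorem norm_deriv_le_of_forall_mem_sphere_abs_re_le (hr : 0 < r)
    (hF : DiffContOnCl ℂ F (ball c r)) (hM : ∀ z ∈ sphere c r, |(F z).re| ≤ M) :
    ‖deriv F c‖ ≤ 4 * M / (π * r) := by
  have hre_int : CircleIntegrable (fun z => (F z).re) c r :=
    (continuous_re.comp_continuousOn
      (hF.continuousOn_ball.mono sphere_subset_closedBall)).circleIntegrable hr.le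
  have h := norm_circleAverage_smul_conj_sub_center_le hre_int hr.le hM
  rw [circleAverage_re_smul_conj_sub_center hF hr, norm_mul, norm_div, norm_pow, norm_real,
    Real.norm_eq_abs, abs_of_pos hr, RCLike.norm_ofNat] at h
  rw [le_div_iff₀ pi_pos] at h
  rw [le_div_iff₀ (by positivity)]
  refine le_of_mul_le_mul_left ?_ hr
  linear_combination 2 * h

theorem norm_deriv_le_of_forall_mem_ball_abs_re_le (hr : 0 < r)
    (hF : DifferentiableOn ℂ F (ball c r)) (hM : ∀ z ∈ ball c r, |(F z).re| ≤ M) :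
    ‖deriv F c‖ ≤ 4 * M / (π * r) := by
  have hlim : Tendsto (fun ρ => 4 * M / (π * ρ)) (𝓝[<] r) (𝓝 (4 * M / (π * r))) :=
    tendsto_nhdsWithin_of_tendsto_nhds
      (tendsto_const_nhds.div (tendsto_const_nhds.mul tendsto_id) (by positivity))
  refine ge_of_tendsto hlim ?_
  filter_upwards [Ioo_mem_nhdsLT hr] with ρ hρ
  exact norm_deriv_le_of_forall_mem_sphere_abs_re_le hρ.1
    (hF.diffContOnCl_ball (closedBall_subset_ball hρ.2))
    fun z hz => hM z (sphere_subset_ball hρ.2 hz)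

theorem norm_fderiv_re_le_norm_deriv {z : ℂ} (hF : DifferentiableAt ℂ F z) :
    ‖fderiv ℝ (fun w => (F w).re) z‖ ≤ ‖deriv F z‖ := by
  have h : HasFDerivAt (fun w => (F w).re) (reCLM.comp ((fderiv ℂ F z).restrictScalars ℝ)) z :=
    reCLM.hasFDerivAt.comp z (hF.hasFDerivAt.restrictScalars ℝ)
  rw [h.fderiv]
  calc _ ≤ ‖reCLM‖ * ‖(fderiv ℂ F z).restrictScalars ℝ‖ :=
        ContinuousLinearMap.opNorm_comp_le _ _
    _ = ‖deriv F z‖ := by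
      rw [reCLM_norm, one_mul, ContinuousLinearMap.norm_restrictScalars, norm_deriv_eq_norm_fderiv]

end

/-- If `u` is a real-valued harmonic function on the unit disk with values in `(-1,1)`,
then `|∇u(0)| ≤ 4/π`. Harmonicity is encoded by `u` being the real part of a
holomorphic function `F`. -/
theorem harmonic_gradient_four_over_pi (u : ℂ → ℝ) (F : ℂ → ℂ)
    (hF : DifferentiableOn ℂ F (Metric.ball 0 1))
    (hre : ∀ z ∈ Metric.ball (0 : ℂ) 1, u z = (F z).re)
    (hmaps : Set.MapsTo u (Metric.ball 0 1) (Set.Ioo (-1 : ℝ) 1)) :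
    ‖fderiv ℝ u 0‖ ≤ 4 / Real.pi := by
  have hball : ball (0 : ℂ) 1 ∈ 𝓝 0 := ball_mem_nhds 0 one_pos
  have hu : u =ᶠ[𝓝 0] fun z => (F z).re := eventually_of_mem hball hre
  have hbound (z : ℂ) (hz : z ∈ ball 0 1) : |(F z).re| ≤ 1 := by
    rw [← hre z hz]
    exact abs_le.2 ⟨(hmaps hz).1.le, (hmaps hz).2.le⟩
  calc ‖fderiv ℝ u 0‖ ≤ ‖deriv F 0‖ := by
        rw [hu.fderiv_eq]
        exact norm_fderiv_re_le_norm_deriv (hF.differentiableAt hball)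
    _ ≤ 4 * 1 / (π * 1) := norm_deriv_le_of_forall_mem_ball_abs_re_le one_pos hF hbound
    _ = 4 / π := by ring
end

section
/- Let f = g + h̄ be a complex-valued harmonic function on 𝔻 (g, h holomorphic) whose image G = f(𝔻) has finite diameter d. Then π·Λ_f(0) ≤ 2d, where Λ_f(0) = |g'(0)| + |h'(0)|. Equality holds for u_d(z) = (d/π)·arg((1+z)/(1−z)). -/
/-!
Project `f` onto the direction in which its differential at `0` is largest: for a suitable unit
`l`, `re (l f) = re ψ` with `ψ = l g + conj l h` holomorphic and `|ψ'(0)| = |g'(0)| + |h'(0)|`.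
Since `re ψ` ranges over an interval of length at most `d` with midpoint `m`, `exp (i π (ψ - m) / d)`
maps the disc into the right half-plane, and Carathéodory's inequality `|u'(0)| ≤ 2 re u(0)` for such maps
gives `|ψ'(0)| ≤ 2d/π`. In the extremal case `(1 + z) / (1 - z)` maps the disc onto the right
half-plane, so its argument fills `(-π/2, π/2)`.
-/

open Real Set Metric Complex
open scoped ComplexConjugate

namespace Complex

theorem normSq_add_conj_sub_normSq_sub (w a : ℂ) :
    normSq (w + conj a) - normSq (w - a) = 4 * w.re * a.re := by
  simp only [normSq_apply, add_re, add_im, sub_re, sub_im, conj_re, conj_im]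
  ring

theorem norm_sub_lt_norm_add_conj_iff {w a : ℂ} (ha : 0 < a.re) :
    ‖w - a‖ < ‖w + conj a‖ ↔ 0 < w.re := by
  rw [← sq_lt_sq₀ (norm_nonneg _) (norm_nonneg _), Complex.sq_norm, Complex.sq_norm,
    ← sub_pos, normSq_add_conj_sub_normSq_sub]
  exact ⟨fun h => by nlinarith, fun h => by positivity⟩

theorem norm_deriv_le_two_mul_re_of_re_pos {u : ℂ → ℂ} (hu : DifferentiableOn ℂ u (ball 0 1))
    (hre : ∀ z ∈ ball (0 : ℂ) 1, 0 < (u z).re) :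
    ‖deriv u 0‖ ≤ 2 * (u 0).re := by
  have h0 : (0 : ℂ) ∈ ball (0 : ℂ) 1 := mem_ball_self one_pos
  set a := u 0
  have ha : 0 < a.re := hre 0 h0
  have hden : ∀ z ∈ ball (0 : ℂ) 1, u z + conj a ≠ 0 := fun z hz h => by
    have := congrArg re h
    simp only [add_re, conj_re, zero_re] at this
    linarith [hre z hz]
  -- `w ↦ (w - a) / (w + conj a)` sends the right half-plane into the disc and `a` to `0`
  set Φ : ℂ → ℂ := fun z => (u z - a) / (u z + conj a)
  have hΦ : DifferentiableOn ℂ Φ (ball 0 1) := (hu.sub_const a).div (hu.add_const _) hden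
  have hmaps : MapsTo Φ (ball 0 1) (closedBall (Φ 0) 1) := fun z hz => by
    have hΦ0 : Φ 0 = 0 := by simp [Φ, a]
    rw [hΦ0, mem_closedBall_zero_iff, norm_div]
    exact div_le_one_of_le₀ ((norm_sub_lt_norm_add_conj_iff ha).2 (hre z hz)).le (norm_nonneg _)
  have hderiv : deriv Φ 0 = deriv u 0 / (2 * a.re) := by
    have hu0 : HasDerivAt u (deriv u 0) 0 :=
      (hu.differentiableAt (isOpen_ball.mem_nhds h0)).hasDerivAt
    rw [((hu0.sub_const a).fun_div (hu0.add_const _) (hden 0 h0)).deriv,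
      show u 0 = a from rfl, sub_self, zero_mul, sub_zero, add_conj]
    have : (a.re : ℂ) ≠ 0 := ofReal_ne_zero.2 ha.ne'
    push_cast
    field_simp
  have hschwarz := norm_deriv_le_one_of_mapsTo_ball hΦ hmaps one_pos
  have hnorm : ‖(2 * a.re : ℂ)‖ = 2 * a.re := by
    rw [← ofReal_ofNat, ← ofReal_mul, norm_real, Real.norm_of_nonneg (by positivity)]
  rwa [hderiv, norm_div, hnorm, div_le_one (by positivity)] at hschwarz

theorem norm_deriv_le_of_re_mem_Ioo {ψ : ℂ → ℂ} {a b : ℝ} (hψ : DifferentiableOn ℂ ψ (ball 0 1))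
    (hre : ∀ z ∈ ball (0 : ℂ) 1, (ψ z).re ∈ Ioo a b) :
    ‖deriv ψ 0‖ ≤ 2 * (b - a) / π := by
  have h0 : (0 : ℂ) ∈ ball (0 : ℂ) 1 := mem_ball_self one_pos
  have hab : 0 < b - a := sub_pos.2 ((hre 0 h0).1.trans (hre 0 h0).2)
  set k := π / (b - a)
  have hk : 0 < k := div_pos pi_pos hab
  have hkab : k * (b - a) = π := div_mul_cancel₀ _ hab.ne'
  -- `exp (i k (ψ - (a + b) / 2))` maps the strip `a < re < b` into the right half-plane
  set u : ℂ → ℂ := fun z => exp (k * I * (ψ z - ((a + b) / 2 : ℝ)))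
  have hu : DifferentiableOn ℂ u (ball 0 1) :=
    ((hψ.sub_const _).const_mul _).cexp
  have hu_re : ∀ z ∈ ball (0 : ℂ) 1, 0 < (u z).re := fun z hz => by
    obtain ⟨hza, hzb⟩ := hre z hz
    have harg : (k * I * (ψ z - ((a + b) / 2 : ℝ))).im = k * ((ψ z).re - (a + b) / 2) := by
      simp [mul_re, mul_im]
    rw [show (u z).re = _ from exp_re _, harg]
    refine mul_pos (Real.exp_pos _) (Real.cos_pos_of_mem_Ioo ⟨?_, ?_⟩)
    · nlinarith [mul_pos hk (sub_pos.2 hza)]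
    · nlinarith [mul_pos hk (sub_pos.2 hzb)]
  have hderiv : deriv u 0 = u 0 * (k * I * deriv ψ 0) :=
    (((hψ.differentiableAt (isOpen_ball.mem_nhds h0)).hasDerivAt.sub_const _).const_mul
      _).cexp.deriv
  have hcara := norm_deriv_le_two_mul_re_of_re_pos hu hu_re
  have hu0 : 0 < ‖u 0‖ := norm_pos_iff.2 (exp_ne_zero _)
  rw [hderiv, norm_mul, norm_mul, norm_mul, norm_I, mul_one, norm_real,
    Real.norm_of_nonneg hk.le] at hcara
  have : k * ‖deriv ψ 0‖ ≤ 2 := by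
    nlinarith [re_le_norm (u 0)]
  rw [le_div_iff₀ pi_pos]
  calc ‖deriv ψ 0‖ * π = k * ‖deriv ψ 0‖ * (b - a) := by rw [← hkab]; ring
    _ ≤ 2 * (b - a) := by gcongr

theorem norm_deriv_le_of_re_mem_Icc {ψ : ℂ → ℂ} {a b : ℝ} (hψ : DifferentiableOn ℂ ψ (ball 0 1))
    (hre : ∀ z ∈ ball (0 : ℂ) 1, (ψ z).re ∈ Icc a b) :
    ‖deriv ψ 0‖ ≤ 2 * (b - a) / π := by
  refine le_of_forall_pos_le_add fun ε hε => ?_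
  have hδ : 0 < π * ε / 4 := by positivity
  calc ‖deriv ψ 0‖ ≤ 2 * ((b + π * ε / 4) - (a - π * ε / 4)) / π :=
        norm_deriv_le_of_re_mem_Ioo hψ fun z hz =>
          ⟨by linarith [(hre z hz).1], by linarith [(hre z hz).2]⟩
    _ = 2 * (b - a) / π + ε := by field_simp; ring

theorem exists_norm_eq_one_norm_mul_add_conj_mul_eq (a b : ℂ) :
    ∃ l : ℂ, ‖l‖ = 1 ∧ ‖l * a + conj l * b‖ = ‖a‖ + ‖b‖ := by
  -- rotate `a` and `b` onto the common direction `exp (i (arg a + arg b) / 2)`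
  set θ : ℝ := (arg b - arg a) / 2
  set m := exp (((arg a + arg b) / 2 : ℝ) * I)
  have hconj : conj (exp (θ * I)) = exp ((-θ : ℝ) * I) := by
    rw [← exp_conj]; simp
  have ha : exp (θ * I) * a = ‖a‖ * m := by
    conv_lhs => rw [← norm_mul_exp_arg_mul_I a]
    rw [mul_left_comm, ← exp_add]
    congr 2; simp only [θ]; push_cast; ring
  have hb : conj (exp (θ * I)) * b = ‖b‖ * m := by
    conv_lhs => rw [← norm_mul_exp_arg_mul_I b]
    rw [hconj, mul_left_comm, ← exp_add]
    congr 2; simp only [θ]; push_cast; ring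
  refine ⟨exp (θ * I), norm_exp_ofReal_mul_I θ, ?_⟩
  rw [ha, hb, ← add_mul, norm_mul, norm_exp_ofReal_mul_I, mul_one, ← ofReal_add, norm_real,
    Real.norm_of_nonneg (by positivity)]

theorem lipschitzWith_re_mul {l : ℂ} (hl : ‖l‖ = 1) : LipschitzWith 1 fun w : ℂ => (l * w).re :=
  LipschitzWith.of_dist_le_mul fun w w' => by
    rw [Real.dist_eq, ← sub_re, ← mul_sub, dist_eq, NNReal.coe_one, one_mul]
    simpa [hl] using abs_re_le_norm (l * (w - w'))

theorem pi_mul_norm_deriv_add_norm_deriv_le_two_mul_diam {f g h : ℂ → ℂ}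
    (hg : DifferentiableOn ℂ g (ball 0 1)) (hh : DifferentiableOn ℂ h (ball 0 1))
    (hf : ∀ z ∈ ball (0 : ℂ) 1, f z = g z + conj (h z))
    (hbdd : Bornology.IsBounded (f '' ball 0 1)) :
    π * (‖deriv g 0‖ + ‖deriv h 0‖) ≤ 2 * diam (f '' ball 0 1) := by
  have h0 : (0 : ℂ) ∈ ball (0 : ℂ) 1 := mem_ball_self one_pos
  obtain ⟨l, hl, hlgh⟩ := exists_norm_eq_one_norm_mul_add_conj_mul_eq (deriv g 0) (deriv h 0)
  set ψ : ℂ → ℂ := fun z => l * g z + conj l * h z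
  have hψ : DifferentiableOn ℂ ψ (ball 0 1) := (hg.const_mul l).add (hh.const_mul _)
  have hψ' : deriv ψ 0 = l * deriv g 0 + conj l * deriv h 0 :=
    (((hg.differentiableAt (isOpen_ball.mem_nhds h0)).hasDerivAt.const_mul l).add
      ((hh.differentiableAt (isOpen_ball.mem_nhds h0)).hasDerivAt.const_mul _)).deriv
  have hψ_re : ∀ z ∈ ball (0 : ℂ) 1, (ψ z).re = (l * f z).re := fun z hz => by
    simp only [ψ, hf z hz, mul_add, add_re, mul_re, conj_re, conj_im]
    ring
  set T := (fun w : ℂ => (l * w).re) '' (f '' ball 0 1)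
  have hT : Bornology.IsBounded T := (lipschitzWith_re_mul hl).isBounded_image hbdd
  have hψT : ∀ z ∈ ball (0 : ℂ) 1, (ψ z).re ∈ Icc (sInf T) (sSup T) := fun z hz => by
    have hmem : (ψ z).re ∈ T := hψ_re z hz ▸ mem_image_of_mem _ (mem_image_of_mem f hz)
    exact ⟨csInf_le hT.bddBelow hmem, le_csSup hT.bddAbove hmem⟩
  have hdiam : sSup T - sInf T ≤ diam (f '' ball 0 1) := by
    rw [← Real.diam_eq hT]
    simpa only [NNReal.coe_one, one_mul] using (lipschitzWith_re_mul hl).diam_image_le _ hbdd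
  calc π * (‖deriv g 0‖ + ‖deriv h 0‖) = π * ‖deriv ψ 0‖ := by rw [hψ', hlgh]
    _ ≤ π * (2 * (sSup T - sInf T) / π) := by gcongr; exact norm_deriv_le_of_re_mem_Icc hψ hψT
    _ ≤ 2 * diam (f '' ball 0 1) := by rw [mul_div_cancel₀ _ pi_ne_zero]; gcongr

theorem re_one_add_div_one_sub_pos {z : ℂ} (hz : ‖z‖ < 1) : 0 < ((1 + z) / (1 - z)).re := by
  have h1z : 1 - z ≠ 0 := sub_ne_zero.2 fun h => by simp [← h] at hz
  rw [← norm_sub_lt_norm_add_conj_iff (a := 1) (by simp), map_one,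
    show (1 + z) / (1 - z) - 1 = 2 * z / (1 - z) by field_simp; ring,
    show (1 + z) / (1 - z) + 1 = 2 / (1 - z) by field_simp; ring, norm_div, norm_div, norm_mul]
  gcongr
  simpa using hz

theorem exists_mem_ball_one_add_div_one_sub_eq {w : ℂ} (hw : 0 < w.re) :
    ∃ z ∈ ball (0 : ℂ) 1, (1 + z) / (1 - z) = w := by
  have hw1 : w + 1 ≠ 0 := fun h => by
    have := congrArg re h
    rw [add_re, one_re, zero_re] at this
    linarith
  refine ⟨(w - 1) / (w + 1), ?_, by field_simp; ring⟩
  rw [mem_ball_zero_iff, norm_div, div_lt_one (norm_pos_iff.2 hw1)]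
  simpa using (norm_sub_lt_norm_add_conj_iff (w := w) (a := 1) (by simp)).2 hw

theorem image_arg_one_add_div_one_sub :
    (fun z : ℂ => arg ((1 + z) / (1 - z))) '' ball 0 1 = Ioo (-(π / 2)) (π / 2) := by
  ext θ
  constructor
  · rintro ⟨z, hz, rfl⟩
    exact abs_lt.1 (abs_arg_lt_pi_div_two_iff.2
      (Or.inl (re_one_add_div_one_sub_pos (mem_ball_zero_iff.1 hz))))
  · rintro ⟨hθ₁, hθ₂⟩
    obtain ⟨z, hz, hzw⟩ := exists_mem_ball_one_add_div_one_sub_eq (w := exp (θ * I))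
      (by rw [exp_ofReal_mul_I_re]; exact Real.cos_pos_of_mem_Ioo ⟨hθ₁, hθ₂⟩)
    refine ⟨z, hz, ?_⟩
    dsimp only
    rw [hzw, exp_mul_I, arg_cos_add_sin_mul_I ⟨by linarith [pi_pos], by linarith [pi_pos]⟩]

theorem diam_image_mul_arg_one_add_div_one_sub {c : ℝ} (hc : 0 < c) :
    diam ((fun z : ℂ => c * arg ((1 + z) / (1 - z))) '' ball 0 1) = c * π := by
  rw [← image_image (c * ·) (fun z : ℂ => arg ((1 + z) / (1 - z))), image_arg_one_add_div_one_sub,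
    image_mul_left_Ioo hc, Real.diam_Ioo (by nlinarith [pi_pos])]
  ring

theorem hasDerivAt_log_one_add_div_one_sub :
    HasDerivAt (fun z : ℂ => log ((1 + z) / (1 - z))) 2 0 := by
  have hnum : HasDerivAt (fun z : ℂ => 1 + z) 1 0 := (hasDerivAt_id' 0).const_add 1
  have hden : HasDerivAt (fun z : ℂ => 1 - z) (-1) 0 := (hasDerivAt_id' 0).const_sub 1
  have hq : HasDerivAt (fun z : ℂ => (1 + z) / (1 - z))
      ((1 * (1 - 0) - (1 + 0) * -1) / (1 - 0) ^ 2) 0 := hnum.div hden (by norm_num)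
  rw [show ((1 * (1 - 0) - (1 + 0) * -1) / (1 - 0) ^ 2 : ℂ) = 2 by norm_num] at hq
  simpa using hq.clog (by simp)

end Complex

/-- Diameter estimate: if `f = g + conj h` is harmonic on `𝔻` with image of finite
diameter `d`, then `π·Λ_f(0) = π·(|g'(0)| + |h'(0)|) ≤ 2d`.  Equality holds for the
function `u_d(z) = (d/π)·arg ((1+z)/(1-z))`, whose canonical decomposition has
`g = h = -i (d/(2π)) log ((1+z)/(1-z))`. -/
theorem harmonic_diameter_estimate (f g h : ℂ → ℂ) (d : ℝ)
    (hg : DifferentiableOn ℂ g (Metric.ball 0 1))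
    (hh : DifferentiableOn ℂ h (Metric.ball 0 1))
    (hf : ∀ z ∈ Metric.ball (0 : ℂ) 1, f z = g z + (starRingEnd ℂ) (h z))
    (hbdd : Bornology.IsBounded (f '' Metric.ball 0 1))
    (hd : Metric.diam (f '' Metric.ball 0 1) = d) :
    Real.pi * (‖deriv g 0‖ + ‖deriv h 0‖) ≤ 2 * d ∧
    (∀ d' : ℝ, 0 < d' →
      Real.pi *
          (2 * ‖deriv (fun z : ℂ =>
              -Complex.I * ((d' : ℂ) / (2 * Real.pi)) * Complex.log ((1 + z) / (1 - z))) 0‖) =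
        2 * Metric.diam
          ((fun z : ℂ => (d' / Real.pi) * Complex.arg ((1 + z) / (1 - z))) ''
            Metric.ball 0 1)) := by
  refine ⟨hd ▸ pi_mul_norm_deriv_add_norm_deriv_le_two_mul_diam hg hh hf hbdd, fun d' hd' => ?_⟩
  rw [(hasDerivAt_log_one_add_div_one_sub.const_mul _).deriv,
    diam_image_mul_arg_one_add_div_one_sub (div_pos hd' pi_pos)]
  simp only [norm_mul, norm_neg, norm_I, norm_div, norm_real, Real.norm_of_nonneg hd'.le,
    Real.norm_of_nonneg pi_pos.le, Complex.norm_ofNat]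
  field_simp
end
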